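/- arXiv:1810.10365 — 11 statements merged into one kernel-verified Lean document; each statement's English description precedes it below -/
import Mathlib

section
/- Let k and ℓ be nonnegative integers with p := k + ℓ − 1 ≥ 1. If (U, V) solves the self-similar system (S) on the interval (−1,1) and both U and V are bounded on (−1,1), then U and V are identically zero on (−1,1). -/
/-!
Write `a = |U|²`, `b = |V|²` and `r + i q = conj U · V`, so that `q² ≤ a b` and (S) turns into
`(1 + y) a' = 2 F q - 2 d a` and `(1 - y) b' = 2 F q + 2 d b` with `d = 1 / (2p) > 0`.
If `F q ≤ 0`, then `(1 + y)^(2d) a` is nonincreasing, nonnegative and, `a` being bounded, tends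
to `0` at `-1`; hence `a = 0`, so `q = 0`, and in the same way `(1 - y)^(2d) b` is nondecreasing
with limit `0` at `1`, so `b = 0`.

The sign of `F q` comes from the equation for `q`. Either `F = 0` (when `ℓ = 0`), or `F` and
`G r` have a common constant sign `s`: nonnegative for odd `ℓ`, and the sign of `r` for even `ℓ`,
which cannot change because `r` then solves a linear equation `r' = h r`. This makes
`(1 - y²)^d s q` nondecreasing, so if `s q > 0` at some point it stays positive up to `1`; there
`F q ≥ 0`, and the argument above forces `b = 0`, hence `q = 0`, a contradiction.
-/

open Set Complex Filter Topology

/-- `R(y) = U(y) conj(V(y)) + conj(U(y)) V(y)` (a real number, viewed in `ℂ`). -/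
noncomputable def Rfun (U V : ℝ → ℂ) (y : ℝ) : ℂ :=
  U y * (starRingEnd ℂ) (V y) + (starRingEnd ℂ) (U y) * V y

/-- `F(y) = ℓ (|U|² + |V|²)^k R^{ℓ-1}` (equal to `0` when `ℓ = 0`). -/
noncomputable def Ffun (k l : ℕ) (U V : ℝ → ℂ) (y : ℝ) : ℂ :=
  (l : ℂ) * ((‖U y‖ ^ 2 + ‖V y‖ ^ 2 : ℝ) : ℂ) ^ k *
    (Rfun U V y) ^ (l - 1)

/-- `G(y) = k (|U|² + |V|²)^{k-1} R^ℓ` (equal to `0` when `k = 0`). -/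
noncomputable def Gfun (k l : ℕ) (U V : ℝ → ℂ) (y : ℝ) : ℂ :=
  (k : ℂ) * ((‖U y‖ ^ 2 + ‖V y‖ ^ 2 : ℝ) : ℂ) ^ (k - 1) *
    (Rfun U V y) ^ l

/-- `(U, V)` solves the self-similar system (S) on the open set `J`:
`U, V` are continuously differentiable on `J` and for all `y ∈ J`,
`i[(y+1)U' + U/(2p)] = F V + G U` and `i[(y-1)V' + V/(2p)] = F U + G V`,
where `p = k + ℓ - 1`. -/
def SolvesS (k l : ℕ) (U V : ℝ → ℂ) (J : Set ℝ) : Prop :=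
  ContDiffOn ℝ 1 U J ∧ ContDiffOn ℝ 1 V J ∧
  ∀ y ∈ J,
    Complex.I * ((↑y + 1) * deriv U y + (1 / (2 * ((k + l - 1 : ℕ) : ℂ))) * U y)
      = Ffun k l U V y * V y + Gfun k l U V y * U y ∧
    Complex.I * ((↑y - 1) * deriv V y + (1 / (2 * ((k + l - 1 : ℕ) : ℂ))) * V y)
      = Ffun k l U V y * U y + Gfun k l U V y * V y


open ComplexConjugate

lemma eq_zero_of_monotoneOn_of_tendsto {f : ℝ → ℝ} {x z : ℝ} (hmono : MonotoneOn f (Ioo x z))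
    (hf : ∀ y ∈ Ioo x z, 0 ≤ f y) (hlim : Tendsto f (𝓝[<] z) (𝓝 0)) :
    ∀ y ∈ Ioo x z, f y = 0 := by
  intro y hy
  have hle : ∀ᶠ w in 𝓝[<] z, f y ≤ f w := by
    filter_upwards [Ioo_mem_nhdsLT hy.2] with w hw
    exact hmono hy ⟨hy.1.trans hw.1, hw.2⟩ hw.1.le
  exact le_antisymm (ge_of_tendsto hlim hle) (hf y hy)

lemma monotoneOn_rpow_mul {φ φ' f f' : ℝ → ℝ} {c x z : ℝ}
    (hφ : ∀ y ∈ Ioo x z, 0 < φ y) (hφ' : ∀ y ∈ Ioo x z, HasDerivAt φ (φ' y) y)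
    (hf' : ∀ y ∈ Ioo x z, HasDerivAt f (f' y) y)
    (h : ∀ y ∈ Ioo x z, 0 ≤ φ y * f' y + c * φ' y * f y) :
    MonotoneOn (fun y => φ y ^ c * f y) (Ioo x z) := by
  have hderiv : ∀ y ∈ Ioo x z, HasDerivAt (fun y => φ y ^ c * f y)
      (φ y ^ (c - 1) * (φ y * f' y + c * φ' y * f y)) y := by
    intro y hy
    refine (((hφ' y hy).rpow_const (p := c) (Or.inl (hφ y hy).ne')).mul (hf' y hy)).congr_deriv ?_
    have hne := (hφ y hy).ne'
    rw [Real.rpow_sub_one hne]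
    field_simp
    ring
  refine monotoneOn_of_hasDerivWithinAt_nonneg (convex_Ioo x z)
    (fun y hy => (hderiv y hy).continuousAt.continuousWithinAt)
    (fun y hy => (hderiv y (interior_subset hy)).hasDerivWithinAt) fun y hy => ?_
  rw [interior_Ioo] at hy
  exact mul_nonneg (Real.rpow_nonneg (hφ y hy).le _) (h y hy)

lemma eq_zero_of_mul_le_one_sub_mul_deriv {b : ℝ → ℝ} {c t M : ℝ} (hc : 0 < c)
    (hb0 : ∀ y ∈ Ioo t 1, 0 ≤ b y) (hbM : ∀ y ∈ Ioo t 1, b y ≤ M)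
    (hb : ∀ y ∈ Ioo t 1, DifferentiableAt ℝ b y)
    (hineq : ∀ y ∈ Ioo t 1, c * b y ≤ (1 - y) * deriv b y) :
    ∀ y ∈ Ioo t 1, b y = 0 := by
  intro y hy
  have hweight : ∀ y ∈ Ioo t 1, 0 < (1 - y) ^ c := fun y hy =>
    Real.rpow_pos_of_pos (sub_pos.2 hy.2) c
  have hmono : MonotoneOn (fun y => (1 - y) ^ c * b y) (Ioo t 1) :=
    monotoneOn_rpow_mul (φ' := fun _ => -1) (fun y hy => sub_pos.2 hy.2)
      (fun y _ => (hasDerivAt_id y).const_sub 1) (fun y hy => (hb y hy).hasDerivAt)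
      (fun y hy => by linarith [hineq y hy])
  have hweight_lim : Tendsto (fun y : ℝ => (1 - y) ^ c) (𝓝[<] 1) (𝓝 0) := by
    have h : ContinuousAt (fun y : ℝ => (1 - y) ^ c) 1 :=
      (continuousAt_const.sub continuousAt_id).rpow_const (Or.inr hc.le)
    simpa [Real.zero_rpow hc.ne'] using h.tendsto.mono_left nhdsWithin_le_nhds
  have hlim : Tendsto (fun y => (1 - y) ^ c * b y) (𝓝[<] 1) (𝓝 0) := by
    have hmem : Ioo t 1 ∈ 𝓝[<] (1 : ℝ) := Ioo_mem_nhdsLT (hy.1.trans hy.2)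
    refine squeeze_zero' ?_ ?_ (by simpa using hweight_lim.mul_const M)
    · filter_upwards [hmem] with w hw using mul_nonneg (hweight w hw).le (hb0 w hw)
    · filter_upwards [hmem] with w hw using
        mul_le_mul_of_nonneg_left (hbM w hw) (hweight w hw).le
  have h0 := eq_zero_of_monotoneOn_of_tendsto hmono
    (fun w hw => mul_nonneg (hweight w hw).le (hb0 w hw)) hlim y hy
  exact (mul_eq_zero.1 h0).resolve_left (hweight y hy).ne'

lemma eq_zero_of_one_add_mul_deriv_le {a : ℝ → ℝ} {c t M : ℝ} (hc : 0 < c)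
    (ha0 : ∀ y ∈ Ioo (-1) t, 0 ≤ a y) (haM : ∀ y ∈ Ioo (-1) t, a y ≤ M)
    (ha : ∀ y ∈ Ioo (-1) t, DifferentiableAt ℝ a y)
    (hineq : ∀ y ∈ Ioo (-1) t, (1 + y) * deriv a y ≤ -(c * a y)) :
    ∀ y ∈ Ioo (-1) t, a y = 0 := by
  have hmem : ∀ {y}, y ∈ Ioo (-t) 1 → -y ∈ Ioo (-1) t := fun hy =>
    ⟨by linarith [hy.2], by linarith [hy.1]⟩
  have h := eq_zero_of_mul_le_one_sub_mul_deriv (b := fun y => a (-y)) hc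
    (fun y hy => ha0 _ (hmem hy)) (fun y hy => haM _ (hmem hy))
    (fun y hy => differentiableAt_comp_neg.2 (ha _ (hmem hy)))
    (fun y hy => by rw [deriv_comp_neg]; linarith [hineq _ (hmem hy)])
  intro y hy
  simpa using h (-y) ⟨by linarith [hy.2], by linarith [hy.1]⟩

lemma forall_nonneg_or_forall_nonpos_of_hasDerivAt_mul {r h : ℝ → ℝ} {x z : ℝ}
    (hh : ContinuousOn h (Ioo x z)) (hr : ∀ y ∈ Ioo x z, HasDerivAt r (h y * r y) y) :
    (∀ y ∈ Ioo x z, 0 ≤ r y) ∨ (∀ y ∈ Ioo x z, r y ≤ 0) := by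
  rcases (Ioo x z).eq_empty_or_nonempty with hempty | ⟨c, hc⟩
  · simp [hempty]
  set H : ℝ → ℝ := fun y => ∫ t in c..y, h t
  have hH : ∀ y ∈ Ioo x z, HasDerivAt H (h y) y := fun y hy =>
    intervalIntegral.integral_hasDerivAt_right
      (hh.mono ((ordConnected_Ioo).uIcc_subset hc hy)).intervalIntegrable
      (hh.stronglyMeasurableAtFilter isOpen_Ioo y hy) (hh.continuousAt (isOpen_Ioo.mem_nhds hy))
  -- `r * exp (-H)` has derivative zero, so `r` is a constant multiple of `exp H`
  have hderiv : ∀ y ∈ Ioo x z, HasDerivAt (fun y => r y * Real.exp (-H y)) 0 y := fun y hy =>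
    ((hr y hy).mul (hH y hy).neg.exp).congr_deriv (by ring)
  have hconst : ∀ y ∈ Ioo x z, r y * Real.exp (-H y) = r c * Real.exp (-H c) := fun y hy =>
    isOpen_Ioo.is_const_of_deriv_eq_zero isPreconnected_Ioo
      (fun w hw => (hderiv w hw).differentiableAt.differentiableWithinAt)
      (fun w hw => (hderiv w hw).deriv) hy hc
  rcases le_total 0 (r c) with hc0 | hc0
  · refine Or.inl fun y hy => ?_
    nlinarith [hconst y hy, Real.exp_pos (-H y), Real.exp_pos (-H c)]
  · refine Or.inr fun y hy => ?_
    nlinarith [hconst y hy, Real.exp_pos (-H y), Real.exp_pos (-H c)]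

/- `F` and `G` of (S) as functions of `A = |U|² + |V|²` and `r = Re (conj U · V)`, for which
`R = 2 r`. -/
def realF (k l : ℕ) (A r : ℝ) : ℝ := l * A ^ k * (2 * r) ^ (l - 1)

def realG (k l : ℕ) (A r : ℝ) : ℝ := k * A ^ (k - 1) * (2 * r) ^ l

section Sign

variable {k l : ℕ} {A r : ℝ}

lemma realF_nonneg_and_realG_mul_nonneg_of_odd (hA : 0 ≤ A) (hl : Odd l) :
    0 ≤ realF k l A r ∧ 0 ≤ realG k l A r * r := by
  have hF : 0 ≤ (2 * r) ^ (l - 1) := (Nat.Odd.sub_odd hl odd_one).pow_nonneg _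
  have hG : 0 ≤ (2 * r) ^ l * r := by
    have := hl.add_one.pow_nonneg (2 * r)
    rw [pow_succ] at this
    linarith
  unfold realF realG
  constructor
  · positivity
  · calc (0 : ℝ) ≤ k * A ^ (k - 1) * ((2 * r) ^ l * r) := by positivity
      _ = _ := by ring

lemma realF_nonneg_and_realG_mul_nonneg (hA : 0 ≤ A) (hr : 0 ≤ r) :
    0 ≤ realF k l A r ∧ 0 ≤ realG k l A r * r := by
  unfold realF realG
  constructor <;> positivity

lemma realF_nonpos_and_realG_mul_nonpos_of_even (hA : 0 ≤ A) (hl : Even l) (hl0 : l ≠ 0)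
    (hr : r ≤ 0) : realF k l A r ≤ 0 ∧ realG k l A r * r ≤ 0 := by
  have hF : (2 * r) ^ (l - 1) ≤ 0 :=
    (Nat.Even.sub_odd (Nat.one_le_iff_ne_zero.2 hl0) hl odd_one).pow_nonpos (by linarith)
  have hG : 0 ≤ k * A ^ (k - 1) * (2 * r) ^ l := mul_nonneg (by positivity) (hl.pow_nonneg _)
  exact ⟨mul_nonpos_of_nonneg_of_nonpos (by positivity) hF, mul_nonpos_of_nonneg_of_nonpos hG hr⟩

lemma realG_eq_mul (hl : l ≠ 0) :
    realG k l A r = 2 * k * A ^ (k - 1) * (2 * r) ^ (l - 1) * r := by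
  rw [realG, ← pow_sub_one_mul hl]
  ring

end Sign

/- The equations satisfied by `a = |U|²`, `b = |V|²`, `q = Im (conj U · V)` and
`r = Re (conj U · V)` for a solution `(U, V)` of (S), with `d = 1 / (2p)`. -/
structure QuadraticSystem (d : ℝ) (a b q r F G : ℝ → ℝ) : Prop where
  a_nonneg : ∀ y ∈ Ioo (-1 : ℝ) 1, 0 ≤ a y
  b_nonneg : ∀ y ∈ Ioo (-1 : ℝ) 1, 0 ≤ b y
  sq_q_le : ∀ y ∈ Ioo (-1 : ℝ) 1, q y ^ 2 ≤ a y * b y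
  differentiableAt_a : ∀ y ∈ Ioo (-1 : ℝ) 1, DifferentiableAt ℝ a y
  differentiableAt_b : ∀ y ∈ Ioo (-1 : ℝ) 1, DifferentiableAt ℝ b y
  differentiableAt_q : ∀ y ∈ Ioo (-1 : ℝ) 1, DifferentiableAt ℝ q y
  differentiableAt_r : ∀ y ∈ Ioo (-1 : ℝ) 1, DifferentiableAt ℝ r y
  deriv_a : ∀ y ∈ Ioo (-1 : ℝ) 1, (1 + y) * deriv a y = 2 * F y * q y - 2 * d * a y
  deriv_b : ∀ y ∈ Ioo (-1 : ℝ) 1, (1 - y) * deriv b y = 2 * F y * q y + 2 * d * b y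
  deriv_q : ∀ y ∈ Ioo (-1 : ℝ) 1, (1 - y ^ 2) * deriv q y - 2 * d * y * q y =
    (1 - y) * (F y * b y + G y * r y) + (1 + y) * (F y * a y + G y * r y)
  deriv_r : ∀ y ∈ Ioo (-1 : ℝ) 1, (1 - y ^ 2) * deriv r y = 2 * d * y * r y - 2 * G y * q y

namespace QuadraticSystem

variable {d M : ℝ} {k l : ℕ} {a b q r F G : ℝ → ℝ}

lemma neg (hS : QuadraticSystem d a b q r F G) : QuadraticSystem d a b (-q) r (-F) (-G) where
  a_nonneg := hS.a_nonneg
  b_nonneg := hS.b_nonneg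
  sq_q_le y hy := by simpa using hS.sq_q_le y hy
  differentiableAt_a := hS.differentiableAt_a
  differentiableAt_b := hS.differentiableAt_b
  differentiableAt_q y hy := (hS.differentiableAt_q y hy).neg
  differentiableAt_r := hS.differentiableAt_r
  deriv_a y hy := by simpa using hS.deriv_a y hy
  deriv_b y hy := by simpa using hS.deriv_b y hy
  deriv_q y hy := by
    simp only [deriv.neg, Pi.neg_apply]
    linear_combination -hS.deriv_q y hy
  deriv_r y hy := by simpa using hS.deriv_r y hy

lemma eq_zero_of_mul_nonpos (hS : QuadraticSystem d a b q r F G) (hd : 0 < d)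
    (haM : ∀ y ∈ Ioo (-1 : ℝ) 1, a y ≤ M) (hbM : ∀ y ∈ Ioo (-1 : ℝ) 1, b y ≤ M)
    (hFq : ∀ y ∈ Ioo (-1 : ℝ) 1, F y * q y ≤ 0) :
    ∀ y ∈ Ioo (-1 : ℝ) 1, a y = 0 ∧ b y = 0 := by
  have ha : ∀ y ∈ Ioo (-1 : ℝ) 1, a y = 0 :=
    eq_zero_of_one_add_mul_deriv_le (c := 2 * d) (by positivity) hS.a_nonneg haM
      hS.differentiableAt_a fun y hy => by linarith [hS.deriv_a y hy, hFq y hy]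
  have hq : ∀ y ∈ Ioo (-1 : ℝ) 1, q y = 0 := fun y hy =>
    pow_eq_zero_iff two_ne_zero |>.1 <| le_antisymm (by simpa [ha y hy] using hS.sq_q_le y hy)
      (sq_nonneg _)
  have hb : ∀ y ∈ Ioo (-1 : ℝ) 1, b y = 0 :=
    eq_zero_of_mul_le_one_sub_mul_deriv (c := 2 * d) (by positivity) hS.b_nonneg hbM
      hS.differentiableAt_b fun y hy => by rw [hS.deriv_b y hy, hq y hy]; simp
  exact fun y hy => ⟨ha y hy, hb y hy⟩

lemma q_nonpos (hS : QuadraticSystem d a b q r F G) (hd : 0 < d)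
    (hbM : ∀ y ∈ Ioo (-1 : ℝ) 1, b y ≤ M)
    (hFG : ∀ y ∈ Ioo (-1 : ℝ) 1, 0 ≤ F y ∧ 0 ≤ G y * r y) :
    ∀ y ∈ Ioo (-1 : ℝ) 1, q y ≤ 0 := by
  intro y₀ hy₀
  by_contra! hq₀
  have hmono : MonotoneOn (fun y => (1 - y ^ 2) ^ d * q y) (Ioo (-1) 1) := by
    refine monotoneOn_rpow_mul (φ' := fun y => -(2 * y)) (fun y hy => ?_)
      (fun y _ => by simpa using ((hasDerivAt_id y).pow 2).const_sub 1)
      (fun y hy => (hS.differentiableAt_q y hy).hasDerivAt) fun y hy => ?_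
    · nlinarith [hy.1, hy.2]
    · obtain ⟨hF, hGr⟩ := hFG y hy
      have hrhs := add_nonneg
        (mul_nonneg (sub_nonneg.2 hy.2.le) (add_nonneg (mul_nonneg hF (hS.b_nonneg y hy)) hGr))
        (mul_nonneg (neg_le_iff_add_nonneg'.1 hy.1.le)
          (add_nonneg (mul_nonneg hF (hS.a_nonneg y hy)) hGr))
      linarith [hS.deriv_q y hy]
  have hq_pos : ∀ y ∈ Ioo y₀ 1, 0 < q y := by
    intro y hy
    have hy' : y ∈ Ioo (-1 : ℝ) 1 := ⟨hy₀.1.trans hy.1, hy.2⟩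
    have hw₀ : 0 < (1 - y₀ ^ 2) ^ d := Real.rpow_pos_of_pos (by nlinarith [hy₀.1, hy₀.2]) d
    have hw : 0 ≤ (1 - y ^ 2) ^ d := Real.rpow_nonneg (by nlinarith [hy'.1, hy'.2]) d
    exact pos_of_mul_pos_right ((mul_pos hw₀ hq₀).trans_le (hmono hy₀ hy' hy.1.le)) hw
  have hb : ∀ y ∈ Ioo y₀ 1, b y = 0 := by
    have hsub : Ioo y₀ 1 ⊆ Ioo (-1 : ℝ) 1 := Ioo_subset_Ioo_left hy₀.1.le
    refine eq_zero_of_mul_le_one_sub_mul_deriv (c := 2 * d) (by positivity)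
      (fun y hy => hS.b_nonneg y (hsub hy)) (fun y hy => hbM y (hsub hy))
      (fun y hy => hS.differentiableAt_b y (hsub hy)) fun y hy => ?_
    rw [hS.deriv_b y (hsub hy)]
    nlinarith [mul_nonneg (hFG y (hsub hy)).1 (hq_pos y hy).le]
  have hmid : (y₀ + 1) / 2 ∈ Ioo y₀ 1 := ⟨by linarith [hy₀.2], by linarith [hy₀.2]⟩
  have hq_sq := hS.sq_q_le _ ⟨by linarith [hy₀.1], hmid.2⟩
  rw [hb _ hmid, mul_zero] at hq_sq
  nlinarith [hq_pos _ hmid]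

lemma F_mul_q_nonpos (hS : QuadraticSystem d a b q r F G) (hd : 0 < d)
    (hbM : ∀ y ∈ Ioo (-1 : ℝ) 1, b y ≤ M)
    (hFG : (∀ y ∈ Ioo (-1 : ℝ) 1, 0 ≤ F y ∧ 0 ≤ G y * r y) ∨
      (∀ y ∈ Ioo (-1 : ℝ) 1, F y ≤ 0 ∧ G y * r y ≤ 0)) :
    ∀ y ∈ Ioo (-1 : ℝ) 1, F y * q y ≤ 0 := by
  intro y hy
  rcases hFG with hFG | hFG
  · exact mul_nonpos_of_nonneg_of_nonpos (hFG y hy).1 (hS.q_nonpos hd hbM hFG y hy)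
  · have hq := hS.neg.q_nonpos hd hbM (fun y hy => by simpa using hFG y hy) y hy
    simp only [Pi.neg_apply, neg_nonpos] at hq
    exact mul_nonpos_of_nonpos_of_nonneg (hFG y hy).1 hq

lemma sign_realF_realG
    (hS : QuadraticSystem d a b q r (fun y => realF k l (a y + b y) (r y))
      (fun y => realG k l (a y + b y) (r y))) (hl : l ≠ 0) :
    (∀ y ∈ Ioo (-1 : ℝ) 1, 0 ≤ realF k l (a y + b y) (r y) ∧
      0 ≤ realG k l (a y + b y) (r y) * r y) ∨
    (∀ y ∈ Ioo (-1 : ℝ) 1, realF k l (a y + b y) (r y) ≤ 0 ∧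
      realG k l (a y + b y) (r y) * r y ≤ 0) := by
  have hA : ∀ y ∈ Ioo (-1 : ℝ) 1, 0 ≤ a y + b y := fun y hy =>
    add_nonneg (hS.a_nonneg y hy) (hS.b_nonneg y hy)
  rcases Nat.even_or_odd l with hl_even | hl_odd
  · -- `G = r · (…)` for `l ≥ 1`, so `r` solves a linear equation `r' = h r`
    have hr_linear : ∀ y ∈ Ioo (-1 : ℝ) 1, HasDerivAt r
        ((2 * d * y - 4 * k * (a y + b y) ^ (k - 1) * (2 * r y) ^ (l - 1) * q y) / (1 - y ^ 2)
          * r y) y := by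
      intro y hy
      have hy2 : 1 - y ^ 2 ≠ 0 := by nlinarith [hy.1, hy.2]
      refine (hS.differentiableAt_r y hy).hasDerivAt.congr_deriv ?_
      field_simp
      linear_combination hS.deriv_r y hy -
        2 * q y * realG_eq_mul (k := k) (A := a y + b y) (r := r y) hl
    have hcont : ContinuousOn (fun y => (2 * d * y - 4 * k * (a y + b y) ^ (k - 1) *
        (2 * r y) ^ (l - 1) * q y) / (1 - y ^ 2)) (Ioo (-1 : ℝ) 1) := by
      have hc : ∀ {f : ℝ → ℝ}, (∀ y ∈ Ioo (-1 : ℝ) 1, DifferentiableAt ℝ f y) →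
          ContinuousOn f (Ioo (-1) 1) := fun hf =>
        continuousOn_of_forall_continuousAt fun y hy => (hf y hy).continuousAt
      have ha := hc hS.differentiableAt_a
      have hb := hc hS.differentiableAt_b
      have hq := hc hS.differentiableAt_q
      have hr := hc hS.differentiableAt_r
      refine ContinuousOn.div (by fun_prop) (by fun_prop) fun y hy => ?_
      nlinarith [hy.1, hy.2]
    rcases forall_nonneg_or_forall_nonpos_of_hasDerivAt_mul hcont hr_linear with hr | hr
    · exact Or.inl fun y hy => realF_nonneg_and_realG_mul_nonneg (hA y hy) (hr y hy)
    · exact Or.inr fun y hy =>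
        realF_nonpos_and_realG_mul_nonpos_of_even (hA y hy) hl_even hl (hr y hy)
  · exact Or.inl fun y hy => realF_nonneg_and_realG_mul_nonneg_of_odd (hA y hy) hl_odd

lemma eq_zero_of_realF_realG
    (hS : QuadraticSystem d a b q r (fun y => realF k l (a y + b y) (r y))
      (fun y => realG k l (a y + b y) (r y))) (hd : 0 < d)
    (haM : ∀ y ∈ Ioo (-1 : ℝ) 1, a y ≤ M) (hbM : ∀ y ∈ Ioo (-1 : ℝ) 1, b y ≤ M) :
    ∀ y ∈ Ioo (-1 : ℝ) 1, a y = 0 ∧ b y = 0 := by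
  refine hS.eq_zero_of_mul_nonpos hd haM hbM ?_
  rcases eq_or_ne l 0 with rfl | hl
  · simp [realF]
  · exact hS.F_mul_q_nonpos hd hbM (hS.sign_realF_realG hl)


end QuadraticSystem

/- Pointwise form of (S): `u, v, u', v'` stand for `U y, V y, U' y, V' y`. -/
section Pointwise

variable {u v u' v' : ℂ} {y d F G : ℝ}

lemma re_im_of_eq_left (e : I * ((y + 1) * u' + d * u) = F * v + G * u) :
    (y + 1) * u'.re + d * u.re = F * v.im + G * u.im ∧
      (y + 1) * u'.im + d * u.im = -(F * v.re + G * u.re) := by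
  have h1 := congrArg re e
  have h2 := congrArg im e
  simp only [mul_re, mul_im, add_re, add_im, ofReal_re, ofReal_im, I_re, I_im, one_re,
    one_im] at h1 h2
  constructor <;> linarith

lemma re_im_of_eq_right (e : I * ((y - 1) * v' + d * v) = F * u + G * v) :
    (y - 1) * v'.re + d * v.re = F * u.im + G * v.im ∧
      (y - 1) * v'.im + d * v.im = -(F * u.re + G * v.re) := by
  have h1 := congrArg re e
  have h2 := congrArg im e
  simp only [mul_re, mul_im, add_re, add_im, sub_re, sub_im, ofReal_re, ofReal_im, I_re, I_im,
    one_re, one_im] at h1 h2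
  constructor <;> linarith

lemma one_add_mul_two_inner (e₁ : I * ((y + 1) * u' + d * u) = F * v + G * u) :
    (1 + y) * (2 * inner ℝ u u') = 2 * F * (conj u * v).im - 2 * d * ‖u‖ ^ 2 := by
  obtain ⟨h1, h2⟩ := re_im_of_eq_left e₁
  rw [Complex.inner, Complex.sq_norm, Complex.normSq_apply]
  simp only [mul_re, mul_im, conj_re, conj_im]
  linear_combination 2 * u.re * h1 + 2 * u.im * h2

lemma one_sub_mul_two_inner (e₂ : I * ((y - 1) * v' + d * v) = F * u + G * v) :
    (1 - y) * (2 * inner ℝ v v') = 2 * F * (conj u * v).im + 2 * d * ‖v‖ ^ 2 := by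
  obtain ⟨h1, h2⟩ := re_im_of_eq_right e₂
  rw [Complex.inner, Complex.sq_norm, Complex.normSq_apply]
  simp only [mul_re, mul_im, conj_re, conj_im]
  linear_combination -2 * v.re * h1 - 2 * v.im * h2

lemma one_sub_sq_mul_im (e₁ : I * ((y + 1) * u' + d * u) = F * v + G * u)
    (e₂ : I * ((y - 1) * v' + d * v) = F * u + G * v) :
    (1 - y ^ 2) * (conj u' * v + conj u * v').im - 2 * d * y * (conj u * v).im =
      (1 - y) * (F * ‖v‖ ^ 2 + G * (conj u * v).re) +
        (1 + y) * (F * ‖u‖ ^ 2 + G * (conj u * v).re) := by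
  obtain ⟨h1, h2⟩ := re_im_of_eq_left e₁
  obtain ⟨h3, h4⟩ := re_im_of_eq_right e₂
  rw [Complex.sq_norm, Complex.sq_norm, Complex.normSq_apply, Complex.normSq_apply]
  simp only [add_im, mul_re, mul_im, conj_re, conj_im]
  linear_combination
    (1 - y) * (v.im * h1 - v.re * h2) + (1 + y) * (u.im * h3 - u.re * h4)

lemma one_sub_sq_mul_re (e₁ : I * ((y + 1) * u' + d * u) = F * v + G * u)
    (e₂ : I * ((y - 1) * v' + d * v) = F * u + G * v) :
    (1 - y ^ 2) * (conj u' * v + conj u * v').re =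
      2 * d * y * (conj u * v).re - 2 * G * (conj u * v).im := by
  obtain ⟨h1, h2⟩ := re_im_of_eq_left e₁
  obtain ⟨h3, h4⟩ := re_im_of_eq_right e₂
  simp only [add_re, mul_re, mul_im, conj_re, conj_im]
  linear_combination
    (1 - y) * (v.re * h1 + v.im * h2) - (1 + y) * (u.re * h3 + u.im * h4)

end Pointwise

lemma HasDerivAt.complex_re {f : ℝ → ℂ} {f' : ℂ} {x : ℝ} (h : HasDerivAt f f' x) :
    HasDerivAt (fun t => (f t).re) f'.re x :=
  Complex.reCLM.hasFDerivAt.comp_hasDerivAt x h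

lemma HasDerivAt.complex_im {f : ℝ → ℂ} {f' : ℂ} {x : ℝ} (h : HasDerivAt f f' x) :
    HasDerivAt (fun t => (f t).im) f'.im x :=
  Complex.imCLM.hasFDerivAt.comp_hasDerivAt x h

section SelfSimilar

variable {k l : ℕ} {U V : ℝ → ℂ} {y : ℝ}

lemma Rfun_eq : Rfun U V y = (2 * (conj (U y) * V y).re : ℝ) := by
  apply Complex.ext <;> simp [Rfun] <;> ring

lemma Ffun_eq : Ffun k l U V y = realF k l (‖U y‖ ^ 2 + ‖V y‖ ^ 2) (conj (U y) * V y).re := by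
  rw [Ffun, Rfun_eq, realF]
  push_cast
  ring

lemma Gfun_eq : Gfun k l U V y = realG k l (‖U y‖ ^ 2 + ‖V y‖ ^ 2) (conj (U y) * V y).re := by
  rw [Gfun, Rfun_eq, realG]
  push_cast
  ring

lemma SolvesS.quadraticSystem (hS : SolvesS k l U V (Ioo (-1) 1)) :
    QuadraticSystem (1 / (2 * (k + l - 1 : ℕ))) (fun y => ‖U y‖ ^ 2) (fun y => ‖V y‖ ^ 2)
      (fun y => (conj (U y) * V y).im) (fun y => (conj (U y) * V y).re)
      (fun y => realF k l (‖U y‖ ^ 2 + ‖V y‖ ^ 2) (conj (U y) * V y).re)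
      (fun y => realG k l (‖U y‖ ^ 2 + ‖V y‖ ^ 2) (conj (U y) * V y).re) := by
  obtain ⟨hU, hV, heq⟩ := hS
  have hU' : ∀ y ∈ Ioo (-1 : ℝ) 1, HasDerivAt U (deriv U y) y := fun y hy =>
    ((hU.differentiableOn one_ne_zero).differentiableAt (isOpen_Ioo.mem_nhds hy)).hasDerivAt
  have hV' : ∀ y ∈ Ioo (-1 : ℝ) 1, HasDerivAt V (deriv V y) y := fun y hy =>
    ((hV.differentiableOn one_ne_zero).differentiableAt (isOpen_Ioo.mem_nhds hy)).hasDerivAt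
  have hW : ∀ y ∈ Ioo (-1 : ℝ) 1, HasDerivAt (fun t => conj (U t) * V t)
      (conj (deriv U y) * V y + conj (U y) * deriv V y) y := fun y hy =>
    (hU' y hy).star.mul (hV' y hy)
  have hcoeff : (1 / (2 * ((k + l - 1 : ℕ) : ℂ))) = ((1 / (2 * (k + l - 1 : ℕ)) : ℝ) : ℂ) := by
    push_cast
    ring
  simp only [Ffun_eq, Gfun_eq, hcoeff] at heq
  exact
  { a_nonneg := fun y _ => by positivity
    b_nonneg := fun y _ => by positivity
    sq_q_le := fun y _ =>
      calc (conj (U y) * V y).im ^ 2 ≤ normSq (conj (U y) * V y) := by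
            rw [sq]; exact Complex.im_sq_le_normSq _
        _ = ‖U y‖ ^ 2 * ‖V y‖ ^ 2 := by simp [Complex.sq_norm]
    differentiableAt_a := fun y hy => (hU' y hy).norm_sq.differentiableAt
    differentiableAt_b := fun y hy => (hV' y hy).norm_sq.differentiableAt
    differentiableAt_q := fun y hy => (hW y hy).complex_im.differentiableAt
    differentiableAt_r := fun y hy => (hW y hy).complex_re.differentiableAt
    deriv_a := fun y hy => by
      rw [(hU' y hy).norm_sq.deriv]
      exact one_add_mul_two_inner (heq y hy).1
    deriv_b := fun y hy => by
      rw [(hV' y hy).norm_sq.deriv]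
      exact one_sub_mul_two_inner (heq y hy).2
    deriv_q := fun y hy => by
      rw [(hW y hy).complex_im.deriv]
      exact one_sub_sq_mul_im (heq y hy).1 (heq y hy).2
    deriv_r := fun y hy => by
      rw [(hW y hy).complex_re.deriv]
      exact one_sub_sq_mul_re (heq y hy).1 (heq y hy).2 }

end SelfSimilar

/-- nonexistence of bounded self-similar solutions on `(-1,1)`. -/
theorem no_bounded_selfsimilar (k l : ℕ) (hp : 1 ≤ k + l - 1) (U V : ℝ → ℂ)
    (hS : SolvesS k l U V (Ioo (-1 : ℝ) 1))
    (hbU : ∃ M : ℝ, ∀ y ∈ Ioo (-1 : ℝ) 1, ‖U y‖ ≤ M)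
    (hbV : ∃ M : ℝ, ∀ y ∈ Ioo (-1 : ℝ) 1, ‖V y‖ ≤ M) :
    ∀ y ∈ Ioo (-1 : ℝ) 1, U y = 0 ∧ V y = 0 := by
  obtain ⟨MU, hMU⟩ := hbU
  obtain ⟨MV, hMV⟩ := hbV
  have hd : (0 : ℝ) < 1 / (2 * (k + l - 1 : ℕ)) := by
    have : (1 : ℝ) ≤ (k + l - 1 : ℕ) := by exact_mod_cast hp
    positivity
  have hUM : ∀ y ∈ Ioo (-1 : ℝ) 1, ‖U y‖ ^ 2 ≤ max MU MV ^ 2 := fun y hy =>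
    pow_le_pow_left₀ (norm_nonneg _) ((hMU y hy).trans (le_max_left _ _)) 2
  have hVM : ∀ y ∈ Ioo (-1 : ℝ) 1, ‖V y‖ ^ 2 ≤ max MU MV ^ 2 := fun y hy =>
    pow_le_pow_left₀ (norm_nonneg _) ((hMV y hy).trans (le_max_right _ _)) 2
  intro y hy
  simpa using hS.quadraticSystem.eq_zero_of_realF_realG hd hUM hVM y hy
end

section
/- Let k and ℓ be nonnegative integers with p := k + ℓ − 1 ≥ 1. If (U, V) solves the self-similar system (S) on (−1,1), then the pair U₁(x,t) := (1−t)^(−1/(2p))·U(x/(1−t)), U₂(x,t) := (1−t)^(−1/(2p))·V(x/(1−t)) is a classical solution of the nonlinear Dirac system (D) on the open set Ω := {(x,t) ∈ ℝ² : t < 1 and |x| < 1 − t}. -/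
open Set Complex Filter Topology

/-- `R = conj(U₁) U₂ + conj(U₂) U₁` for functions of `(x, t) ∈ ℝ²`. -/
noncomputable def RD (U₁ U₂ : ℝ × ℝ → ℂ) (z : ℝ × ℝ) : ℂ :=
  (starRingEnd ℂ) (U₁ z) * U₂ z + (starRingEnd ℂ) (U₂ z) * U₁ z

/-- `F = ℓ (|U₁|² + |U₂|²)^k R^{ℓ-1}` (equal to `0` when `ℓ = 0`). -/
noncomputable def FD (k l : ℕ) (U₁ U₂ : ℝ × ℝ → ℂ) (z : ℝ × ℝ) : ℂ :=
  (l : ℂ) * ((‖U₁ z‖ ^ 2 + ‖U₂ z‖ ^ 2 : ℝ) : ℂ) ^ k *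
    (RD U₁ U₂ z) ^ (l - 1)

/-- `G = k (|U₁|² + |U₂|²)^{k-1} R^ℓ` (equal to `0` when `k = 0`). -/
noncomputable def GD (k l : ℕ) (U₁ U₂ : ℝ × ℝ → ℂ) (z : ℝ × ℝ) : ℂ :=
  (k : ℂ) * ((‖U₁ z‖ ^ 2 + ‖U₂ z‖ ^ 2 : ℝ) : ℂ) ^ (k - 1) *
    (RD U₁ U₂ z) ^ l

/-- `(U₁, U₂)` is a classical solution of the massless nonlinear Dirac system (D)
on the open set `Ω ⊆ ℝ²` of variables `(x, t)`: both functions are differentiable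
on `Ω` and `i(∂ₜU₁ + ∂ₓU₁) = F U₂ + G U₁`, `i(∂ₜU₂ - ∂ₓU₂) = F U₁ + G U₂` hold there,
where `∂ₓ` (resp. `∂ₜ`) is the directional derivative along `(1,0)` (resp. `(0,1)`). -/
def SolvesD (k l : ℕ) (U₁ U₂ : ℝ × ℝ → ℂ) (Ω : Set (ℝ × ℝ)) : Prop :=
  ∀ z ∈ Ω, DifferentiableAt ℝ U₁ z ∧ DifferentiableAt ℝ U₂ z ∧
    Complex.I * (fderiv ℝ U₁ z (0, 1) + fderiv ℝ U₁ z (1, 0))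
      = FD k l U₁ U₂ z * U₂ z + GD k l U₁ U₂ z * U₁ z ∧
    Complex.I * (fderiv ℝ U₂ z (0, 1) - fderiv ℝ U₂ z (1, 0))
      = FD k l U₁ U₂ z * U₁ z + GD k l U₁ U₂ z * U₂ z

/-! If `s := 1 - t` and `y := x / s`, the ansatz `s ^ c · W(y)` has `∂ₓ = s ^ c s⁻¹ W'(y)` and
`∂ₜ = s ^ c s⁻¹ (y W'(y) - c W(y))`, so `∂ₜ ± ∂ₓ` is `s ^ c s⁻¹ ((y ± 1) W' - c W)`, which for
`c = -1/(2p)` is `s ^ c s⁻¹` times the bracket on the left of (S). The nonlinearities `F`, `G` are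
homogeneous of degree `2p` in `(U₁, U₂)` and `(s ^ c) ^ (2p) = s⁻¹`, so both sides of (D) carry the
same factor `s ^ c s⁻¹`. -/

theorem natCast_mul_mul_pow_mul_mul_pow_sub_one {R : Type*} [CommSemiring R] (m n : ℕ) (a N M : R) :
    (m : R) * (a * N) ^ n * (a * M) ^ (m - 1) = a ^ (n + m - 1) * ((m : R) * N ^ n * M ^ (m - 1)) := by
  rcases m with _ | m
  · simp
  · simp only [Nat.add_sub_cancel, ← add_assoc, mul_pow, pow_add]
    ring

theorem abs_lt_iff_div_mem_Ioo {x s : ℝ} (hs : 0 < s) : |x| < s ↔ x / s ∈ Ioo (-1 : ℝ) 1 := by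
  rw [mem_Ioo, lt_div_iff₀ hs, div_lt_one hs, abs_lt, neg_one_mul]

theorem rpow_neg_one_div_two_mul_pow {s : ℝ} (hs : 0 < s) {p : ℕ} (hp : p ≠ 0) :
    (s ^ (-(1 / (2 * (p : ℝ))))) ^ (2 * p) = s⁻¹ := by
  rw [← Real.rpow_natCast, ← Real.rpow_mul hs.le, ← Real.rpow_neg_one]
  congr 1
  push_cast
  field_simp

noncomputable def selfSimilar (c : ℝ) (W : ℝ → ℂ) (z : ℝ × ℝ) : ℂ :=
  (((1 - z.2) ^ c : ℝ) : ℂ) * W (z.1 / (1 - z.2))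

section SelfSimilar

variable {c : ℝ} {W : ℝ → ℂ} {z : ℝ × ℝ}

theorem hasFDerivAt_selfSimilar (hs : 0 < 1 - z.2) (hW : DifferentiableAt ℝ W (z.1 / (1 - z.2))) :
    HasFDerivAt (selfSimilar c W)
      (((1 - z.2) ^ c * (1 - z.2)⁻¹) •
        ((ContinuousLinearMap.fst ℝ ℝ ℝ).smulRight (deriv W (z.1 / (1 - z.2))) +
          (ContinuousLinearMap.snd ℝ ℝ ℝ).smulRight
            (((z.1 / (1 - z.2) : ℝ) : ℂ) * deriv W (z.1 / (1 - z.2)) - c * W (z.1 / (1 - z.2))))) z := by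
  have hs' : HasFDerivAt (fun w : ℝ × ℝ => 1 - w.2) (-ContinuousLinearMap.snd ℝ ℝ ℝ) z := by
    simpa using (hasFDerivAt_snd (p := z)).const_sub (1 : ℝ)
  have hpow := Complex.ofRealCLM.hasFDerivAt.comp z
    ((Real.hasDerivAt_rpow_const (p := c) (Or.inl hs.ne')).comp_hasFDerivAt z hs')
  have hquot := (hasFDerivAt_fst (p := z)).mul ((hasDerivAt_inv hs.ne').comp_hasFDerivAt z hs')
  have hWy := (hW.hasDerivAt.hasFDerivAt).comp z hquot
  refine ((hpow.mul hWy).congr_of_eventuallyEq (Eventually.of_forall fun w => ?_)).congr_fderiv ?_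
  · simp [selfSimilar, div_eq_mul_inv]
  · ext
    all_goals
      simp [Real.rpow_sub_one hs.ne', div_eq_mul_inv, ← inv_pow]
      ring

theorem fderiv_selfSimilar_add (hs : 0 < 1 - z.2) (hW : DifferentiableAt ℝ W (z.1 / (1 - z.2))) :
    fderiv ℝ (selfSimilar c W) z (0, 1) + fderiv ℝ (selfSimilar c W) z (1, 0) =
      (((1 - z.2) ^ c : ℝ) : ℂ) * (((1 - z.2)⁻¹ : ℝ) : ℂ) *
        ((((z.1 / (1 - z.2) : ℝ) : ℂ) + 1) * deriv W (z.1 / (1 - z.2)) - c * W (z.1 / (1 - z.2))) := by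
  rw [(hasFDerivAt_selfSimilar hs hW).fderiv]
  simp only [ofReal_div, ofReal_sub, ofReal_one, smul_add, add_apply, smul_apply,
    ContinuousLinearMap.smulRight_apply, ContinuousLinearMap.coe_fst', zero_smul, smul_zero,
    ContinuousLinearMap.coe_snd', one_smul, real_smul, ofReal_mul, ofReal_inv, zero_add, add_zero]
  ring

theorem fderiv_selfSimilar_sub (hs : 0 < 1 - z.2) (hW : DifferentiableAt ℝ W (z.1 / (1 - z.2))) :
    fderiv ℝ (selfSimilar c W) z (0, 1) - fderiv ℝ (selfSimilar c W) z (1, 0) =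
      (((1 - z.2) ^ c : ℝ) : ℂ) * (((1 - z.2)⁻¹ : ℝ) : ℂ) *
        ((((z.1 / (1 - z.2) : ℝ) : ℂ) - 1) * deriv W (z.1 / (1 - z.2)) - c * W (z.1 / (1 - z.2))) := by
  rw [(hasFDerivAt_selfSimilar hs hW).fderiv]
  simp only [ofReal_div, ofReal_sub, ofReal_one, smul_add, add_apply, smul_apply,
    ContinuousLinearMap.smulRight_apply, ContinuousLinearMap.coe_fst', zero_smul, smul_zero,
    ContinuousLinearMap.coe_snd', one_smul, real_smul, ofReal_mul, ofReal_inv, zero_add, add_zero]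
  ring

end SelfSimilar

section Nonlinearity

variable (k l : ℕ) (c : ℝ) (U V : ℝ → ℂ) (z : ℝ × ℝ)

theorem norm_sq_add_norm_sq_selfSimilar :
    ((‖selfSimilar c U z‖ ^ 2 + ‖selfSimilar c V z‖ ^ 2 : ℝ) : ℂ) =
      (((1 - z.2) ^ c : ℝ) : ℂ) ^ 2 *
        ((‖U (z.1 / (1 - z.2))‖ ^ 2 + ‖V (z.1 / (1 - z.2))‖ ^ 2 : ℝ) : ℂ) := by
  simp only [selfSimilar, norm_mul, Complex.norm_real, Real.norm_eq_abs, mul_pow, sq_abs]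
  push_cast
  ring

theorem RD_selfSimilar :
    RD (selfSimilar c U) (selfSimilar c V) z =
      (((1 - z.2) ^ c : ℝ) : ℂ) ^ 2 * Rfun U V (z.1 / (1 - z.2)) := by
  simp only [RD, Rfun, selfSimilar, map_mul, Complex.conj_ofReal]
  ring

theorem FD_selfSimilar :
    FD k l (selfSimilar c U) (selfSimilar c V) z =
      ((((1 - z.2) ^ c : ℝ) : ℂ) ^ 2) ^ (k + l - 1) * Ffun k l U V (z.1 / (1 - z.2)) := by
  rw [FD, Ffun, norm_sq_add_norm_sq_selfSimilar, RD_selfSimilar,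
    natCast_mul_mul_pow_mul_mul_pow_sub_one]

theorem GD_selfSimilar :
    GD k l (selfSimilar c U) (selfSimilar c V) z =
      ((((1 - z.2) ^ c : ℝ) : ℂ) ^ 2) ^ (k + l - 1) * Gfun k l U V (z.1 / (1 - z.2)) := by
  rw [GD, Gfun, norm_sq_add_norm_sq_selfSimilar, RD_selfSimilar, mul_right_comm,
    natCast_mul_mul_pow_mul_mul_pow_sub_one, add_comm l, mul_right_comm (k : ℂ)]

end Nonlinearity

/-- a solution `(U, V)` of the self-similar system (S) on `(-1,1)`
produces a classical solution
`U₁(x,t) = (1-t)^{-1/(2p)} U(x/(1-t))`, `U₂(x,t) = (1-t)^{-1/(2p)} V(x/(1-t))`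
of the nonlinear Dirac system (D) on `Ω = {(x,t) : t < 1, |x| < 1 - t}`. -/
theorem selfsimilar_gives_dirac_solution (k l : ℕ) (hp : 1 ≤ k + l - 1) (U V : ℝ → ℂ)
    (hS : SolvesS k l U V (Ioo (-1 : ℝ) 1)) :
    SolvesD k l
      (fun z => (((1 - z.2) ^ (-(1 / (2 * ((k + l - 1 : ℕ) : ℝ)))) : ℝ) : ℂ) * U (z.1 / (1 - z.2)))
      (fun z => (((1 - z.2) ^ (-(1 / (2 * ((k + l - 1 : ℕ) : ℝ)))) : ℝ) : ℂ) * V (z.1 / (1 - z.2)))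
      {z : ℝ × ℝ | z.2 < 1 ∧ |z.1| < 1 - z.2} := by
  set c := -(1 / (2 * ((k + l - 1 : ℕ) : ℝ))) with hc
  change SolvesD k l (selfSimilar c U) (selfSimilar c V) _
  rintro z ⟨-, hz⟩
  obtain ⟨hU, hV, hUV⟩ := hS
  have hs : 0 < 1 - z.2 := (abs_nonneg _).trans_lt hz
  have hy := (abs_lt_iff_div_mem_Ioo hs).mp hz
  have hUy := (hU.contDiffAt (isOpen_Ioo.mem_nhds hy)).differentiableAt one_ne_zero
  have hVy := (hV.contDiffAt (isOpen_Ioo.mem_nhds hy)).differentiableAt one_ne_zero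
  have hscale : ((((1 - z.2) ^ c : ℝ) : ℂ) ^ 2) ^ (k + l - 1) = (((1 - z.2)⁻¹ : ℝ) : ℂ) := by
    rw [← pow_mul, ← Complex.ofReal_pow, rpow_neg_one_div_two_mul_pow hs (by omega)]
  have hcC : (c : ℂ) = -(1 / (2 * ((k + l - 1 : ℕ) : ℂ))) := by simp [hc]
  obtain ⟨eqU, eqV⟩ := hUV _ hy
  refine ⟨(hasFDerivAt_selfSimilar hs hUy).differentiableAt,
    (hasFDerivAt_selfSimilar hs hVy).differentiableAt, ?_, ?_⟩
  · rw [fderiv_selfSimilar_add hs hUy, FD_selfSimilar, GD_selfSimilar, hscale]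
    simp only [selfSimilar]
    linear_combination (((1 - z.2) ^ c : ℝ) : ℂ) * (((1 - z.2)⁻¹ : ℝ) : ℂ) *
      (eqU - I * U (z.1 / (1 - z.2)) * hcC)
  · rw [fderiv_selfSimilar_sub hs hVy, FD_selfSimilar, GD_selfSimilar, hscale]
    simp only [selfSimilar]
    linear_combination (((1 - z.2) ^ c : ℝ) : ℂ) * (((1 - z.2)⁻¹ : ℝ) : ℂ) *
      (eqV - I * V (z.1 / (1 - z.2)) * hcC)
end

section
/- Let k ≥ 2 be an integer and ℓ = 0, so that p := k − 1 ≥ 1. If (U, V) solves the self-similar system (S) on (−1,1), then the functions y ↦ (1+y)^(1/p)·|U(y)|² and y ↦ (1−y)^(1/p)·|V(y)|² are constant on (−1,1). -/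
open Set Complex Filter Topology

/-!
With `ℓ = 0` the coupling `F` vanishes and `G` is real, so pairing the `U`-equation with `U`
(real inner product on `ℂ`) kills its right-hand side and leaves
`(1 + y) (|U|²)' + |U|² / p = 0`; the integrating factor `(1 + y)^(1/p)` makes
`(1 + y)^(1/p) |U|²` locally constant. The `V`-equation gives `(1 - y) (|V|²)' - |V|² / p = 0`
in the same way.
-/

theorem IsOpen.is_const_of_hasDerivAt_zero {s : Set ℝ} {f : ℝ → ℝ} (hs : IsOpen s)
    (hs' : IsPreconnected s) (hf : ∀ y ∈ s, HasDerivAt f 0 y) {x y : ℝ} (hx : x ∈ s)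
    (hy : y ∈ s) : f x = f y :=
  hs.is_const_of_deriv_eq_zero hs' (fun t ht => (hf t ht).differentiableAt.differentiableWithinAt)
    (fun t ht => (hf t ht).deriv) hx hy

theorem HasDerivAt.rpow_const_mul_eq_zero {h f : ℝ → ℝ} {h' f' q y : ℝ}
    (hh : HasDerivAt h h' y) (hy : h y ≠ 0) (hf : HasDerivAt f f' y)
    (hode : h y * f' + q * h' * f y = 0) :
    HasDerivAt (fun t => h t ^ q * f t) 0 y := by
  refine ((hh.rpow_const (Or.inl hy)).mul hf).congr_deriv ?_
  rw [Real.rpow_sub_one hy]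
  field_simp
  linear_combination h y ^ q * hode

theorem Complex.real_inner_eq_zero_of_I_mul_eq_ofReal_mul {w z : ℂ} {g : ℝ}
    (h : I * z = g * w) : inner ℝ w z = 0 := by
  have hz : z = -(I * g * w) := by linear_combination -I * h + z * I_sq
  rw [hz, Complex.inner, neg_mul, mul_assoc, mul_assoc, mul_conj, ← ofReal_mul]
  simp

section EllZero

variable {k : ℕ} {U V : ℝ → ℂ} {J : Set ℝ} {y : ℝ}

theorem Ffun_zero_right : Ffun k 0 U V y = 0 := by
  simp [Ffun]

theorem Gfun_zero_right :
    Gfun k 0 U V y = ((k * (‖U y‖ ^ 2 + ‖V y‖ ^ 2) ^ (k - 1) : ℝ) : ℂ) := by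
  simp [Gfun]

theorem SolvesS.inner_deriv_fst (hS : SolvesS k 0 U V J) (hy : y ∈ J) :
    (y + 1) * inner ℝ (U y) (deriv U y) + ‖U y‖ ^ 2 / (2 * ((k - 1 : ℕ) : ℝ)) = 0 := by
  have h := (hS.2.2 y hy).1
  rw [Ffun_zero_right, Gfun_zero_right, zero_mul, zero_add] at h
  have hsmul : (↑y + 1) * deriv U y + 1 / (2 * ((k + 0 - 1 : ℕ) : ℂ)) * U y
      = (y + 1) • deriv U y + (1 / (2 * ((k - 1 : ℕ) : ℝ))) • U y := by
    simp [Complex.real_smul]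
  rw [hsmul] at h
  rw [← Complex.real_inner_eq_zero_of_I_mul_eq_ofReal_mul h, inner_add_right,
    real_inner_smul_right, real_inner_smul_right, real_inner_self_eq_norm_sq]
  ring

theorem SolvesS.inner_deriv_snd (hS : SolvesS k 0 U V J) (hy : y ∈ J) :
    (y - 1) * inner ℝ (V y) (deriv V y) + ‖V y‖ ^ 2 / (2 * ((k - 1 : ℕ) : ℝ)) = 0 := by
  have h := (hS.2.2 y hy).2
  rw [Ffun_zero_right, Gfun_zero_right, zero_mul, zero_add] at h
  have hsmul : (↑y - 1) * deriv V y + 1 / (2 * ((k + 0 - 1 : ℕ) : ℂ)) * V y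
      = (y - 1) • deriv V y + (1 / (2 * ((k - 1 : ℕ) : ℝ))) • V y := by
    simp [Complex.real_smul]
  rw [hsmul] at h
  rw [← Complex.real_inner_eq_zero_of_I_mul_eq_ofReal_mul h, inner_add_right,
    real_inner_smul_right, real_inner_smul_right, real_inner_self_eq_norm_sq]
  ring

theorem SolvesS.hasDerivAt_fst {l : ℕ} (hS : SolvesS k l U V J) (hJ : IsOpen J) (hy : y ∈ J) :
    HasDerivAt U (deriv U y) y :=
  ((hS.1.differentiableOn one_ne_zero).differentiableAt (hJ.mem_nhds hy)).hasDerivAt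

theorem SolvesS.hasDerivAt_snd {l : ℕ} (hS : SolvesS k l U V J) (hJ : IsOpen J) (hy : y ∈ J) :
    HasDerivAt V (deriv V y) y :=
  ((hS.2.1.differentiableOn one_ne_zero).differentiableAt (hJ.mem_nhds hy)).hasDerivAt

theorem SolvesS.hasDerivAt_one_add_rpow_mul_norm_sq (hS : SolvesS k 0 U V J) (hJ : IsOpen J)
    (hy : y ∈ J) (hy1 : -1 < y) :
    HasDerivAt (fun t => (1 + t) ^ (1 / ((k - 1 : ℕ) : ℝ)) * ‖U t‖ ^ 2) 0 y := by
  refine ((hasDerivAt_id' y).const_add 1).rpow_const_mul_eq_zero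
    (by linarith : (0 : ℝ) < 1 + y).ne' (hS.hasDerivAt_fst hJ hy).norm_sq ?_
  linear_combination 2 * hS.inner_deriv_fst hy

theorem SolvesS.hasDerivAt_one_sub_rpow_mul_norm_sq (hS : SolvesS k 0 U V J) (hJ : IsOpen J)
    (hy : y ∈ J) (hy1 : y < 1) :
    HasDerivAt (fun t => (1 - t) ^ (1 / ((k - 1 : ℕ) : ℝ)) * ‖V t‖ ^ 2) 0 y := by
  refine ((hasDerivAt_id' y).const_sub 1).rpow_const_mul_eq_zero
    (by linarith : (0 : ℝ) < 1 - y).ne' (hS.hasDerivAt_snd hJ hy).norm_sq ?_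
  linear_combination -2 * hS.inner_deriv_snd hy

end EllZero

theorem ell_zero_moduli_constant_general (k : ℕ) (U V : ℝ → ℂ)
    (hS : SolvesS k 0 U V (Ioo (-1 : ℝ) 1)) :
    ∀ y ∈ Ioo (-1 : ℝ) 1, ∀ z ∈ Ioo (-1 : ℝ) 1,
      (1 + y) ^ (1 / ((k - 1 : ℕ) : ℝ)) * ‖U y‖ ^ 2
        = (1 + z) ^ (1 / ((k - 1 : ℕ) : ℝ)) * ‖U z‖ ^ 2 ∧
      (1 - y) ^ (1 / ((k - 1 : ℕ) : ℝ)) * ‖V y‖ ^ 2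
        = (1 - z) ^ (1 / ((k - 1 : ℕ) : ℝ)) * ‖V z‖ ^ 2 :=
  fun _ hy _ hz =>
    ⟨isOpen_Ioo.is_const_of_hasDerivAt_zero isPreconnected_Ioo
        (fun _ ht => hS.hasDerivAt_one_add_rpow_mul_norm_sq isOpen_Ioo ht ht.1) hy hz,
      isOpen_Ioo.is_const_of_hasDerivAt_zero isPreconnected_Ioo
        (fun _ ht => hS.hasDerivAt_one_sub_rpow_mul_norm_sq isOpen_Ioo ht ht.2) hy hz⟩

/-- for `ℓ = 0` and `k ≥ 2` (so `p = k - 1 ≥ 1`), the quantities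
`(1+y)^{1/p} |U(y)|²` and `(1-y)^{1/p} |V(y)|²` are constant on `(-1,1)`. -/
theorem ell_zero_moduli_constant (k : ℕ) (hk : 2 ≤ k) (U V : ℝ → ℂ)
    (hS : SolvesS k 0 U V (Ioo (-1 : ℝ) 1)) :
    ∀ y ∈ Ioo (-1 : ℝ) 1, ∀ z ∈ Ioo (-1 : ℝ) 1,
      (1 + y) ^ (1 / ((k - 1 : ℕ) : ℝ)) * ‖U y‖ ^ 2
        = (1 + z) ^ (1 / ((k - 1 : ℕ) : ℝ)) * ‖U z‖ ^ 2 ∧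
      (1 - y) ^ (1 / ((k - 1 : ℕ) : ℝ)) * ‖V y‖ ^ 2
        = (1 - z) ^ (1 / ((k - 1 : ℕ) : ℝ)) * ‖V z‖ ^ 2 :=
  ell_zero_moduli_constant_general k U V hS
end

section
/- Let k be a nonnegative integer and ℓ an odd positive integer with p := k + ℓ − 1 ≥ 1. Suppose (U, V) solves the self-similar system (S) on (−1,1) and J ⊆ (−1,1) is an open subinterval on which U(y) ≠ 0 and V(y) ≠ 0 for all y ∈ J. Then the function y ↦ Im(conj(U(y))·V(y)) / (|U(y)|·|V(y)|) is nondecreasing on J. -/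
/-!
With `w = conj U * V` the quantity is `Im w / |w| = sin (arg w)`, whose derivative is
`Re w * Im (conj w * w') / |w|^3`. Multiplying the two equations by `conj U`, resp. `conj V`, and
taking real parts expresses `Im (conj U * U')` and `Im (conj V * V')` through `F Re w + G |U|^2`,
resp. `F Re w + G |V|^2`; the term `U / (2p)` drops out. Hence `Re w * Im (conj w * w')` is a
combination, with the positive weights `1 / (1 ± y)`, of `F (Re w)^2` and `G Re w`. Both are
nonnegative for odd `ℓ`: `F` carries the even power `R^(ℓ-1)`, and `G Re w` the even power
`(Re w)^(ℓ+1)`, since `R = 2 Re w`.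
-/

open Set Complex Filter Topology

open ComplexConjugate

theorem HasDerivAt.im_div_norm {w : ℝ → ℂ} {w' : ℂ} {t : ℝ} (hw : HasDerivAt w w' t)
    (h0 : w t ≠ 0) :
    HasDerivAt (fun s => (w s).im / ‖w s‖) ((w t).re * (conj (w t) * w').im / ‖w t‖ ^ 3) t := by
  have him : HasDerivAt (fun s => (w s).im) w'.im t := imCLM.hasFDerivAt.comp_hasDerivAt t hw
  have hnorm : HasDerivAt (fun s => ‖w s‖) ((conj (w t) * w').re / ‖w t‖) t := by
    have := hw.norm_sq.sqrt (by positivity)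
    simp only [norm_nonneg, Real.sqrt_sq, Complex.inner] at this
    convert this using 1
    field_simp
  refine (him.div hnorm (by positivity)).congr_deriv ?_
  have hsq := Complex.sq_norm (w t)
  rw [Complex.normSq_apply] at hsq
  field_simp
  simp only [mul_re, mul_im, conj_re, conj_im]
  linear_combination w'.im * hsq

theorem Odd.pow_mul_self_nonneg {n : ℕ} (hn : Odd n) (x : ℝ) : 0 ≤ x ^ n * x := by
  simpa [pow_succ] using hn.add_one.pow_nonneg x

theorem im_conj_mul_of_I_mul_eq {u v u' : ℂ} {s c F G : ℝ}
    (h : I * (s * u' + c * u) = F * v + G * u) :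
    s * (conj u * u').im = -(F * (conj u * v).re + G * ‖u‖ ^ 2) := by
  have := congrArg (fun z => (conj u * z).re) h
  rw [← Complex.normSq_eq_norm_sq, Complex.normSq_apply]
  simp only [mul_re, mul_im, conj_re, conj_im, add_re, add_im, I_re, I_im, ofReal_re,
    ofReal_im] at this ⊢
  linear_combination -this

theorem im_conj_conj_mul_mul_add (u v u' v' : ℂ) :
    (conj (conj u * v) * (conj u' * v + conj u * v')).im
      = ‖u‖ ^ 2 * (conj v * v').im - ‖v‖ ^ 2 * (conj u * u').im := by
  simp only [← Complex.normSq_eq_norm_sq, Complex.normSq_apply, mul_re, mul_im, conj_re,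
    conj_im, add_re, add_im]
  ring

theorem phase_deriv_nonneg_of_eq {u v u' v' : ℂ} {y c F G : ℝ} (hy : y ∈ Ioo (-1) 1)
    (hF : 0 ≤ F) (hG : 0 ≤ G * (conj u * v).re)
    (hu : I * ((y + 1) * u' + c * u) = F * v + G * u)
    (hv : I * ((y - 1) * v' + c * v) = F * u + G * v) :
    0 ≤ (conj u * v).re * (conj (conj u * v) * (conj u' * v + conj u * v')).im := by
  have hvu : (conj v * u).re = (conj u * v).re := by simp only [mul_re, conj_re, conj_im]; ring
  set a := (conj u * v).re
  have hp : (y + 1) * (a * (conj u * u').im) = -(F * a ^ 2 + G * a * ‖u‖ ^ 2) := by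
    rw [mul_left_comm, im_conj_mul_of_I_mul_eq (s := y + 1) (by push_cast; exact hu)]; ring
  have hq : (1 - y) * (a * (conj v * v').im) = F * a ^ 2 + G * a * ‖v‖ ^ 2 := by
    have h := im_conj_mul_of_I_mul_eq (s := y - 1) (by push_cast; exact hv)
    rw [hvu] at h
    linear_combination (-a) * h
  have hap : a * (conj u * u').im ≤ 0 := by
    nlinarith [hy.1, mul_nonneg hF (sq_nonneg a), mul_nonneg hG (sq_nonneg ‖u‖)]
  have haq : 0 ≤ a * (conj v * v').im := by
    nlinarith [hy.2, mul_nonneg hF (sq_nonneg a), mul_nonneg hG (sq_nonneg ‖v‖)]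
  rw [im_conj_conj_mul_mul_add]
  nlinarith [mul_nonneg (sq_nonneg ‖u‖) haq, mul_nonneg (sq_nonneg ‖v‖) (neg_nonneg.2 hap)]

theorem Rfun_eq_ofReal (U V : ℝ → ℂ) (y : ℝ) :
    Rfun U V y = ((2 * (conj (U y) * V y).re : ℝ) : ℂ) := by
  rw [Rfun, ← add_conj, add_comm]
  simp

theorem Ffun_eq_ofReal (k l : ℕ) (U V : ℝ → ℂ) (y : ℝ) :
    Ffun k l U V y =
      ((l * (‖U y‖ ^ 2 + ‖V y‖ ^ 2) ^ k * (2 * (conj (U y) * V y).re) ^ (l - 1) : ℝ) : ℂ) := by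
  rw [Ffun, Rfun_eq_ofReal]
  push_cast
  rfl

theorem Gfun_eq_ofReal (k l : ℕ) (U V : ℝ → ℂ) (y : ℝ) :
    Gfun k l U V y =
      ((k * (‖U y‖ ^ 2 + ‖V y‖ ^ 2) ^ (k - 1) * (2 * (conj (U y) * V y).re) ^ l : ℝ) : ℂ) := by
  rw [Gfun, Rfun_eq_ofReal]
  push_cast
  rfl

namespace SolvesS

variable {k l : ℕ} {U V : ℝ → ℂ}

theorem hasDerivAt_conj_mul {J : Set ℝ} (hS : SolvesS k l U V J) (hJ : IsOpen J) {y : ℝ}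
    (hy : y ∈ J) :
    HasDerivAt (fun t => conj (U t) * V t) (conj (deriv U y) * V y + conj (U y) * deriv V y) y := by
  have hU := ((hS.1.differentiableOn one_ne_zero).differentiableAt (hJ.mem_nhds hy)).hasDerivAt
  have hV := ((hS.2.1.differentiableOn one_ne_zero).differentiableAt (hJ.mem_nhds hy)).hasDerivAt
  exact hU.star.mul hV

theorem phase_deriv_nonneg (hS : SolvesS k l U V (Ioo (-1) 1)) (hl : Odd l) {y : ℝ}
    (hy : y ∈ Ioo (-1) 1) :
    0 ≤ (conj (U y) * V y).re *
      (conj (conj (U y) * V y) * (conj (deriv U y) * V y + conj (U y) * deriv V y)).im := by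
  obtain ⟨hU, hV⟩ := hS.2.2 y hy
  have hc : 1 / (2 * ((k + l - 1 : ℕ) : ℂ)) = ((1 / (2 * (k + l - 1 : ℕ)) : ℝ) : ℂ) := by
    push_cast; rfl
  rw [Ffun_eq_ofReal, Gfun_eq_ofReal, hc] at hU hV
  refine phase_deriv_nonneg_of_eq hy ?_ ?_ hU hV
  · exact mul_nonneg (by positivity) ((Nat.Odd.sub_odd hl odd_one).pow_nonneg _)
  · have h := mul_nonneg (by positivity : (0 : ℝ) ≤ k * (‖U y‖ ^ 2 + ‖V y‖ ^ 2) ^ (k - 1))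
      (hl.pow_mul_self_nonneg (2 * (conj (U y) * V y).re))
    linarith

theorem exists_hasDerivAt_sin_phase_nonneg (hS : SolvesS k l U V (Ioo (-1) 1)) (hl : Odd l)
    {y : ℝ} (hy : y ∈ Ioo (-1) 1) (hU : U y ≠ 0) (hV : V y ≠ 0) :
    ∃ d, 0 ≤ d ∧ HasDerivAt (fun t => (conj (U t) * V t).im / (‖U t‖ * ‖V t‖)) d y := by
  have hw := (hS.hasDerivAt_conj_mul isOpen_Ioo hy).im_div_norm
    (mul_ne_zero ((map_ne_zero _).2 hU) hV)
  simp only [norm_mul, Complex.norm_conj] at hw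
  exact ⟨_, div_nonneg (hS.phase_deriv_nonneg hl hy) (by positivity), hw⟩

end SolvesS

theorem sin_phase_monotone_odd_general (k l : ℕ) (hl : Odd l) (U V : ℝ → ℂ)
    (hS : SolvesS k l U V (Ioo (-1 : ℝ) 1))
    (a b : ℝ) (hab : Ioo a b ⊆ Ioo (-1 : ℝ) 1)
    (hU : ∀ y ∈ Ioo a b, U y ≠ 0) (hV : ∀ y ∈ Ioo a b, V y ≠ 0) :
    MonotoneOn
      (fun y => ((starRingEnd ℂ) (U y) * V y).im / (‖U y‖ * ‖V y‖))
      (Ioo a b) := by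
  choose! d hd_nonneg hd using fun y (hy : y ∈ Ioo a b) =>
    hS.exists_hasDerivAt_sin_phase_nonneg hl (hab hy) (hU y hy) (hV y hy)
  refine monotoneOn_of_hasDerivWithinAt_nonneg (f' := d) (convex_Ioo a b)
    (fun y hy => (hd y hy).continuousAt.continuousWithinAt) ?_ ?_ <;> rw [interior_Ioo]
  exacts [fun y hy => (hd y hy).hasDerivWithinAt, hd_nonneg]

/-- for odd `ℓ`, the relative phase quantity
`Im(conj(U) V)/(|U| |V|)` is nondecreasing on any open subinterval of `(-1,1)`
where `U` and `V` do not vanish. -/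
theorem sin_phase_monotone_odd (k l : ℕ) (hl : Odd l) (hlpos : 1 ≤ l)
    (hp : 1 ≤ k + l - 1) (U V : ℝ → ℂ)
    (hS : SolvesS k l U V (Ioo (-1 : ℝ) 1))
    (a b : ℝ) (hab : Ioo a b ⊆ Ioo (-1 : ℝ) 1)
    (hU : ∀ y ∈ Ioo a b, U y ≠ 0) (hV : ∀ y ∈ Ioo a b, V y ≠ 0) :
    MonotoneOn
      (fun y => ((starRingEnd ℂ) (U y) * V y).im / (‖U y‖ * ‖V y‖))
      (Ioo a b) :=
  sin_phase_monotone_odd_general k l hl U V hS a b hab hU hV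
end

section
/- Let k be a nonnegative integer and ℓ an even integer with ℓ ≥ 2 and p := k + ℓ − 1 ≥ 1. Suppose (U, V) solves the self-similar system (S) on (−1,1), and suppose there exists y₀ ∈ (−1,1) with U(y₀) ≠ 0, V(y₀) ≠ 0 and Re(conj(U(y₀))·V(y₀)) = 0. Then Re(conj(U(y))·V(y)) = 0 for all y ∈ (−1,1), and the functions y ↦ (1+y)^(1/(2p))·U(y) and y ↦ (1−y)^(1/(2p))·V(y) are constant on (−1,1). -/
open Set Complex Filter Topology

/-! Along (S), `R = 2 Re (conj U · V)` satisfies a linear equation `R' = c R` with `c`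
continuous on `(-1, 1)`: differentiating, the `F`-terms cancel because `F` is real, and
`G = (k S^(k-1) R^(ℓ-1)) R` with `S = |U|² + |V|²`. Hence `R` vanishes identically once it
vanishes at `y₀`. Then `F = G = 0` (as `ℓ ≥ 2`), and (S) decouples into
`(1 + y) U' + U / (2p) = 0` and `(1 - y) V' = V / (2p)`, which say exactly
that `(1 + y)^(1/(2p)) U` and `(1 - y)^(1/(2p)) V` are stationary. -/

theorem IsOpen.eq_of_hasDerivAt_zero {𝕜 G : Type*} [RCLike 𝕜] [NormedAddCommGroup G]
    [NormedSpace 𝕜 G] {s : Set 𝕜} {f : 𝕜 → G} (hs : IsOpen s) (hs' : IsPreconnected s)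
    (hf : ∀ x ∈ s, HasDerivAt f 0 x) {x y : 𝕜} (hx : x ∈ s) (hy : y ∈ s) : f x = f y :=
  hs.is_const_of_deriv_eq_zero hs' (fun z hz => (hf z hz).differentiableAt.differentiableWithinAt)
    (fun z hz => (hf z hz).deriv) hx hy

-- `exp (-∫ c) * f` is constant.
theorem eqOn_zero_of_hasDerivAt_mul_self {a b y₀ : ℝ} {c f : ℝ → ℂ}
    (hc : ContinuousOn c (Ioo a b)) (hf : ∀ y ∈ Ioo a b, HasDerivAt f (c y * f y) y)
    (hy₀ : y₀ ∈ Ioo a b) (hf₀ : f y₀ = 0) : EqOn f 0 (Ioo a b) := by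
  have hA : ∀ y ∈ Ioo a b, HasDerivAt (fun y => ∫ t in y₀..y, c t) (c y) y := fun y hy =>
    intervalIntegral.integral_hasDerivAt_right
      ((hc.mono (ordConnected_Ioo.uIcc_subset hy₀ hy)).intervalIntegrable)
      (hc.stronglyMeasurableAtFilter isOpen_Ioo y hy) (hc.continuousAt (isOpen_Ioo.mem_nhds hy))
  have hconst : ∀ y ∈ Ioo a b,
      HasDerivAt (fun y => exp (-∫ t in y₀..y, c t) * f y) 0 y := fun y hy =>
    (((hA y hy).neg.cexp).mul (hf y hy)).congr_deriv (by ring)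
  intro y hy
  have h := isOpen_Ioo.eq_of_hasDerivAt_zero isPreconnected_Ioo hconst hy hy₀
  simpa [hf₀, exp_ne_zero] using h

theorem hasDerivAt_rpow_mul_eq_zero {g : ℝ → ℝ} {f : ℝ → ℂ} {g' α y : ℝ} {f' : ℂ}
    (hg : HasDerivAt g g' y) (hgy : 0 < g y) (hf : HasDerivAt f f' y)
    (h : (g y : ℂ) * f' + α * g' * f y = 0) :
    HasDerivAt (fun t => ((g t ^ α : ℝ) : ℂ) * f t) 0 y := by
  have hpow := (hg.rpow_const (p := α) (Or.inl hgy.ne')).ofReal_comp.mul hf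
  refine hpow.congr_deriv ?_
  have hsplit : g y ^ α = g y ^ (α - 1) * g y := by
    rw [← Real.rpow_add_one hgy.ne', sub_add_cancel]
  rw [hsplit]
  push_cast
  linear_combination ((g y ^ (α - 1) : ℝ) : ℂ) * h

theorem Rfun_eq_two_mul_re (U V : ℝ → ℂ) (y : ℝ) :
    Rfun U V y = (2 * ((starRingEnd ℂ) (U y) * V y).re : ℝ) := by
  rw [← add_conj, Rfun, map_mul, conj_conj]
  ring

theorem conj_Rfun (U V : ℝ → ℂ) (y : ℝ) : (starRingEnd ℂ) (Rfun U V y) = Rfun U V y := by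
  rw [Rfun_eq_two_mul_re, conj_ofReal]

theorem conj_Ffun (k l : ℕ) (U V : ℝ → ℂ) (y : ℝ) :
    (starRingEnd ℂ) (Ffun k l U V y) = Ffun k l U V y := by
  simp only [Ffun, map_mul, map_pow, conj_Rfun, map_natCast, conj_ofReal]

theorem conj_Gfun (k l : ℕ) (U V : ℝ → ℂ) (y : ℝ) :
    (starRingEnd ℂ) (Gfun k l U V y) = Gfun k l U V y := by
  simp only [Gfun, map_mul, map_pow, conj_Rfun, map_natCast, conj_ofReal]

noncomputable def Rcoeff (k l : ℕ) (U V : ℝ → ℂ) (y : ℝ) : ℂ :=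
  I * ((k : ℂ) * ((‖U y‖ ^ 2 + ‖V y‖ ^ 2 : ℝ) : ℂ) ^ (k - 1) * Rfun U V y ^ (l - 1)) *
      ((starRingEnd ℂ) (U y) * V y - U y * (starRingEnd ℂ) (V y)) *
      (((y : ℂ) + 1)⁻¹ - ((y : ℂ) - 1)⁻¹)
    - 1 / (2 * ((k + l - 1 : ℕ) : ℂ)) * (((y : ℂ) + 1)⁻¹ + ((y : ℂ) - 1)⁻¹)

theorem continuousOn_Rcoeff (k l : ℕ) {U V : ℝ → ℂ} (hU : ContinuousOn U (Ioo (-1) 1))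
    (hV : ContinuousOn V (Ioo (-1) 1)) : ContinuousOn (Rcoeff k l U V) (Ioo (-1) 1) := by
  have h1 : ∀ y ∈ Ioo (-1 : ℝ) 1, (y : ℂ) + 1 ≠ 0 := fun y hy => by
    norm_cast; linarith [hy.1]
  have h2 : ∀ y ∈ Ioo (-1 : ℝ) 1, (y : ℂ) - 1 ≠ 0 := fun y hy => by
    norm_cast; linarith [hy.2]
  have hUc : ContinuousOn (fun y => (starRingEnd ℂ) (U y)) (Ioo (-1) 1) :=
    continuous_conj.comp_continuousOn hU
  have hVc : ContinuousOn (fun y => (starRingEnd ℂ) (V y)) (Ioo (-1) 1) :=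
    continuous_conj.comp_continuousOn hV
  have hnorm : ContinuousOn (fun y => ((‖U y‖ ^ 2 + ‖V y‖ ^ 2 : ℝ) : ℂ)) (Ioo (-1) 1) :=
    continuous_ofReal.comp_continuousOn (by fun_prop)
  unfold Rcoeff Rfun
  fun_prop (disch := assumption)

namespace SolvesS

variable {k l : ℕ} {U V : ℝ → ℂ} {y : ℝ}

theorem differentiableAt_fst (hS : SolvesS k l U V (Ioo (-1) 1)) (hy : y ∈ Ioo (-1) 1) :
    DifferentiableAt ℝ U y :=
  (hS.1.differentiableOn one_ne_zero).differentiableAt (isOpen_Ioo.mem_nhds hy)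

theorem differentiableAt_snd (hS : SolvesS k l U V (Ioo (-1) 1)) (hy : y ∈ Ioo (-1) 1) :
    DifferentiableAt ℝ V y :=
  (hS.2.1.differentiableOn one_ne_zero).differentiableAt (isOpen_Ioo.mem_nhds hy)

theorem hasDerivAt_fst_s7 (hS : SolvesS k l U V (Ioo (-1) 1)) (hy : y ∈ Ioo (-1) 1) :
    HasDerivAt U ((-I * (Ffun k l U V y * V y + Gfun k l U V y * U y)
      - 1 / (2 * ((k + l - 1 : ℕ) : ℂ)) * U y) / (y + 1)) y := by
  refine (hS.differentiableAt_fst hy).hasDerivAt.congr_deriv ?_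
  rw [eq_div_iff (by norm_cast; linarith [hy.1])]
  linear_combination (-I) * (hS.2.2 y hy).1 + ((y + 1) * deriv U y
    + 1 / (2 * ((k + l - 1 : ℕ) : ℂ)) * U y) * I_sq

theorem hasDerivAt_snd_s7 (hS : SolvesS k l U V (Ioo (-1) 1)) (hy : y ∈ Ioo (-1) 1) :
    HasDerivAt V ((-I * (Ffun k l U V y * U y + Gfun k l U V y * V y)
      - 1 / (2 * ((k + l - 1 : ℕ) : ℂ)) * V y) / (y - 1)) y := by
  refine (hS.differentiableAt_snd hy).hasDerivAt.congr_deriv ?_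
  rw [eq_div_iff (by norm_cast; linarith [hy.2])]
  linear_combination (-I) * (hS.2.2 y hy).2 + ((y - 1) * deriv V y
    + 1 / (2 * ((k + l - 1 : ℕ) : ℂ)) * V y) * I_sq

theorem hasDerivAt_Rfun (hS : SolvesS k l U V (Ioo (-1) 1)) (hl : 1 ≤ l)
    (hy : y ∈ Ioo (-1) 1) : HasDerivAt (Rfun U V) (Rcoeff k l U V y * Rfun U V y) y := by
  have hU := hS.hasDerivAt_fst_s7 hy
  have hV := hS.hasDerivAt_snd_s7 hy
  have hG : Gfun k l U V y = (k : ℂ) * ((‖U y‖ ^ 2 + ‖V y‖ ^ 2 : ℝ) : ℂ) ^ (k - 1) *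
      Rfun U V y ^ (l - 1) * Rfun U V y := by
    rw [Gfun, mul_assoc _ (_ ^ (l - 1)), ← pow_succ, Nat.sub_add_cancel hl]
  have h1 : (y : ℂ) + 1 ≠ 0 := by norm_cast; linarith [hy.1]
  have h2 : (y : ℂ) - 1 ≠ 0 := by norm_cast; linarith [hy.2]
  refine ((hU.mul hV.star).add (hU.star.mul hV)).congr_deriv ?_
  simp only [star_div₀, star_sub, star_mul', star_neg, star_add, Complex.star_def, conj_I,
    conj_Ffun, conj_Gfun, conj_ofReal, map_one, map_ofNat, map_natCast]
  rw [hG, Rcoeff, Rfun]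
  field_simp
  ring

theorem Rfun_eqOn_zero (hS : SolvesS k l U V (Ioo (-1) 1)) (hl : 1 ≤ l) {y₀ : ℝ}
    (hy₀ : y₀ ∈ Ioo (-1) 1) (hR₀ : Rfun U V y₀ = 0) : EqOn (Rfun U V) 0 (Ioo (-1) 1) :=
  eqOn_zero_of_hasDerivAt_mul_self (continuousOn_Rcoeff k l hS.1.continuousOn hS.2.1.continuousOn)
    (fun _ hy => hS.hasDerivAt_Rfun hl hy) hy₀ hR₀

theorem hasDerivAt_rpow_mul_fst (hS : SolvesS k l U V (Ioo (-1) 1)) (hy : y ∈ Ioo (-1) 1)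
    (hF : Ffun k l U V y = 0) (hG : Gfun k l U V y = 0) :
    HasDerivAt (fun t => (((1 + t) ^ (1 / (2 * ((k + l - 1 : ℕ) : ℝ))) : ℝ) : ℂ) * U t)
      0 y := by
  refine hasDerivAt_rpow_mul_eq_zero ((hasDerivAt_id y).const_add 1) (by linarith [hy.1])
    (hS.differentiableAt_fst hy).hasDerivAt ?_
  have h := (hS.2.2 y hy).1
  rw [hF, hG, zero_mul, zero_mul, add_zero, mul_eq_zero, or_iff_right I_ne_zero] at h
  push_cast
  linear_combination h

theorem hasDerivAt_rpow_mul_snd (hS : SolvesS k l U V (Ioo (-1) 1)) (hy : y ∈ Ioo (-1) 1)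
    (hF : Ffun k l U V y = 0) (hG : Gfun k l U V y = 0) :
    HasDerivAt (fun t => (((1 - t) ^ (1 / (2 * ((k + l - 1 : ℕ) : ℝ))) : ℝ) : ℂ) * V t)
      0 y := by
  refine hasDerivAt_rpow_mul_eq_zero ((hasDerivAt_id y).const_sub 1) (by linarith [hy.2])
    (hS.differentiableAt_snd hy).hasDerivAt ?_
  have h := (hS.2.2 y hy).2
  rw [hF, hG, zero_mul, zero_mul, add_zero, mul_eq_zero, or_iff_right I_ne_zero] at h
  push_cast
  linear_combination -h

end SolvesS

theorem even_invariant_lines_general (k l : ℕ) (hl : 2 ≤ l) (U V : ℝ → ℂ)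
    (hS : SolvesS k l U V (Ioo (-1 : ℝ) 1))
    (y₀ : ℝ) (hy₀ : y₀ ∈ Ioo (-1 : ℝ) 1)
    (hRe : ((starRingEnd ℂ) (U y₀) * V y₀).re = 0) :
    (∀ y ∈ Ioo (-1 : ℝ) 1, ((starRingEnd ℂ) (U y) * V y).re = 0) ∧
    (∃ c₁ c₂ : ℂ, ∀ y ∈ Ioo (-1 : ℝ) 1,
      (((1 + y) ^ (1 / (2 * ((k + l - 1 : ℕ) : ℝ))) : ℝ) : ℂ) * U y = c₁ ∧
      (((1 - y) ^ (1 / (2 * ((k + l - 1 : ℕ) : ℝ))) : ℝ) : ℂ) * V y = c₂) := by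
  have hR : EqOn (Rfun U V) 0 (Ioo (-1) 1) :=
    hS.Rfun_eqOn_zero (by omega) hy₀ (by simp [Rfun_eq_two_mul_re, hRe])
  have hF : ∀ y ∈ Ioo (-1 : ℝ) 1, Ffun k l U V y = 0 := fun y hy => by
    rw [Ffun, hR hy, Pi.zero_apply, zero_pow (by omega), mul_zero]
  have hG : ∀ y ∈ Ioo (-1 : ℝ) 1, Gfun k l U V y = 0 := fun y hy => by
    rw [Gfun, hR hy, Pi.zero_apply, zero_pow (by omega), mul_zero]
  constructor
  · intro y hy
    have h := hR hy
    rw [Rfun_eq_two_mul_re, Pi.zero_apply, ofReal_eq_zero] at h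
    linarith
  · exact ⟨_, _, fun y hy =>
      ⟨isOpen_Ioo.eq_of_hasDerivAt_zero isPreconnected_Ioo
        (fun z hz => hS.hasDerivAt_rpow_mul_fst hz (hF z hz) (hG z hz)) hy hy₀,
      isOpen_Ioo.eq_of_hasDerivAt_zero isPreconnected_Ioo
        (fun z hz => hS.hasDerivAt_rpow_mul_snd hz (hF z hz) (hG z hz)) hy hy₀⟩⟩

/-- for even `ℓ ≥ 2`, the lines `Re(conj(U) V) = 0` are invariant:
if `Re(conj(U(y₀)) V(y₀)) = 0` at a point where `U, V ≠ 0`, then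
`Re(conj(U) V) ≡ 0` on `(-1,1)` and `(1+y)^{1/(2p)} U` and `(1-y)^{1/(2p)} V`
are constant. -/
theorem even_invariant_lines (k l : ℕ) (hleven : Even l) (hl : 2 ≤ l)
    (hp : 1 ≤ k + l - 1) (U V : ℝ → ℂ)
    (hS : SolvesS k l U V (Ioo (-1 : ℝ) 1))
    (y₀ : ℝ) (hy₀ : y₀ ∈ Ioo (-1 : ℝ) 1)
    (hU0 : U y₀ ≠ 0) (hV0 : V y₀ ≠ 0)
    (hRe : ((starRingEnd ℂ) (U y₀) * V y₀).re = 0) :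
    (∀ y ∈ Ioo (-1 : ℝ) 1, ((starRingEnd ℂ) (U y) * V y).re = 0) ∧
    (∃ c₁ c₂ : ℂ, ∀ y ∈ Ioo (-1 : ℝ) 1,
      (((1 + y) ^ (1 / (2 * ((k + l - 1 : ℕ) : ℝ))) : ℝ) : ℂ) * U y = c₁ ∧
      (((1 - y) ^ (1 / (2 * ((k + l - 1 : ℕ) : ℝ))) : ℝ) : ℂ) * V y = c₂) :=
  even_invariant_lines_general k l hl U V hS y₀ hy₀ hRe
end

section
/- Let ξ₀ > 0 and let y₀ := −1/√(1 + 16·ξ₀⁴), which is the unique y ∈ (−1,0) satisfying 1 + 4·ξ₀²·y·(1−y²)^(−1/2) = 0. For y ∈ (y₀, 1) define ρ(y) := ξ₀·(1 + 4·ξ₀²·y·(1−y²)^(−1/2))^(−1/2), U(y) := (1+y)^(−1/2)·ρ(y), and V(y) := −i·(1−y)^(−1/2)·ρ(y). Then (U, V) solves the self-similar system (S) with k = ℓ = 1 (so p = 1) on the interval (y₀, 1), and it satisfies |U(0)| = |V(0)| = ξ₀ > 0. -/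
open Set Complex Filter Topology

/-! Since `V` is `-i` times a real function, `R = 0`, hence `G = 0` and `F = u² + v²`, and (S)
becomes a real system for `u = (1+y)^{-1/2} ρ`, `v = (1-y)^{-1/2} ρ`. Both of its equations reduce
to the single ODE `ρ' = -2 ρ³ (1-y²)^{-3/2}`, which `ρ = ξ₀ A^{-1/2}` satisfies because
`A(y) = 1 + 4ξ₀² y (1-y²)^{-1/2}` (`profileBase ξ₀`) has derivative `4ξ₀² (1-y²)^{-3/2}`.
The same derivative makes `A` strictly increasing on `(-1, 1)`, so its root `y₀` is unique and
`A > 0` on `(y₀, 1)`. -/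

lemma rpow_neg_one_half_eq_inv_sqrt {x : ℝ} (hx : 0 ≤ x) : x ^ (-(1 / 2) : ℝ) = (√x)⁻¹ := by
  rw [Real.rpow_neg hx, ← Real.sqrt_eq_rpow]

lemma rpow_neg_one_half_sub_one_eq_inv_sqrt_pow_three {x : ℝ} (hx : 0 < x) :
    x ^ (-(1 / 2) - 1 : ℝ) = (√x ^ 3)⁻¹ := by
  rw [Real.rpow_sub hx, Real.rpow_one, rpow_neg_one_half_eq_inv_sqrt hx.le]
  nth_rw 2 [← Real.sq_sqrt hx.le]
  field_simp

lemma contDiffOn_one_of_hasDerivAt {𝕜 F : Type*} [NontriviallyNormedField 𝕜]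
    [NormedAddCommGroup F] [NormedSpace 𝕜 F] {f f' : 𝕜 → F} {J : Set 𝕜} (hJ : IsOpen J)
    (hf : ∀ y ∈ J, HasDerivAt f (f' y) y) (hf' : ContinuousOn f' J) : ContDiffOn 𝕜 1 f J := by
  rw [show (1 : WithTop ℕ∞) = 0 + 1 from rfl, contDiffOn_succ_iff_deriv_of_isOpen hJ]
  refine ⟨fun y hy => (hf y hy).differentiableAt.differentiableWithinAt, by simp, ?_⟩
  rw [contDiffOn_zero]
  exact hf'.congr fun y hy => (hf y hy).deriv

lemma solvesS_one_one_of_real {u v : ℝ → ℝ} {U V : ℝ → ℂ} {J : Set ℝ} (hJ : IsOpen J)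
    (hU : ∀ y, U y = (u y : ℂ)) (hV : ∀ y, V y = -I * (v y : ℂ))
    (hu : ContDiffOn ℝ 1 u J) (hv : ContDiffOn ℝ 1 v J)
    (hsys : ∀ y ∈ J, (y + 1) * deriv u y + u y / 2 = -(u y ^ 2 + v y ^ 2) * v y ∧
      (y - 1) * deriv v y + v y / 2 = (u y ^ 2 + v y ^ 2) * u y) :
    SolvesS 1 1 U V J := by
  obtain rfl : U = fun y => (u y : ℂ) := funext hU
  obtain rfl : V = fun y => -I * (v y : ℂ) := funext hV
  refine ⟨ofRealCLM.contDiff.comp_contDiffOn hu,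
    contDiffOn_const.mul (ofRealCLM.contDiff.comp_contDiffOn hv), fun y hy => ?_⟩
  have hdiff {w : ℝ → ℝ} (hw : ContDiffOn ℝ 1 w J) : HasDerivAt w (deriv w y) y :=
    ((hw.differentiableOn one_ne_zero).differentiableAt (hJ.mem_nhds hy)).hasDerivAt
  have hR : Rfun (fun y => (u y : ℂ)) (fun y => -I * (v y : ℂ)) y = 0 := by
    simp only [Rfun, map_mul, map_neg, conj_I, conj_ofReal]
    ring
  have hF : Ffun 1 1 (fun y => (u y : ℂ)) (fun y => -I * (v y : ℂ)) y = u y ^ 2 + v y ^ 2 := by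
    simp [Ffun, Complex.norm_real, sq_abs]
  have hG : Gfun 1 1 (fun y => (u y : ℂ)) (fun y => -I * (v y : ℂ)) y = 0 := by
    rw [Gfun, hR]
    ring
  rw [(hdiff hu).ofReal_comp.deriv, ((hdiff hv).ofReal_comp.const_mul (-I)).deriv, hF, hG]
  obtain ⟨h₁, h₂⟩ := hsys y hy
  have h₁' := congrArg (fun r : ℝ => (r : ℂ)) h₁
  have h₂' := congrArg (fun r : ℝ => (r : ℂ)) h₂
  push_cast at h₁' h₂'
  constructor
  · linear_combination I * h₁'
  · linear_combination (-I ^ 2) * h₂' - ((u y : ℂ) ^ 2 + (v y : ℂ) ^ 2) * u y * I_sq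

lemma real_system_of_hasDerivAt {ρ u v : ℝ → ℝ} {y : ℝ}
    (hu : ∀ t, u t = (1 + t) ^ (-(1 / 2) : ℝ) * ρ t)
    (hv : ∀ t, v t = (1 - t) ^ (-(1 / 2) : ℝ) * ρ t) (hy : y ∈ Ioo (-1 : ℝ) 1)
    (hρ : HasDerivAt ρ (-2 * ρ y ^ 3 / √(1 - y ^ 2) ^ 3) y) :
    (y + 1) * deriv u y + u y / 2 = -(u y ^ 2 + v y ^ 2) * v y ∧
      (y - 1) * deriv v y + v y / 2 = (u y ^ 2 + v y ^ 2) * u y := by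
  have hp : 0 < 1 + y := by linarith [hy.1]
  have hq : 0 < 1 - y := by linarith [hy.2]
  have hdu := ((((hasDerivAt_id' y).const_add 1).rpow_const (p := -(1 / 2))
    (Or.inl hp.ne')).mul hρ).congr_of_eventuallyEq (Eventually.of_forall hu)
  have hdv := ((((hasDerivAt_id' y).const_sub 1).rpow_const (p := -(1 / 2))
    (Or.inl hq.ne')).mul hρ).congr_of_eventuallyEq (Eventually.of_forall hv)
  rw [hdu.deriv, hdv.deriv, hu, hv]
  rw [rpow_neg_one_half_sub_one_eq_inv_sqrt_pow_three hp,
    rpow_neg_one_half_sub_one_eq_inv_sqrt_pow_three hq, rpow_neg_one_half_eq_inv_sqrt hp.le,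
    rpow_neg_one_half_eq_inv_sqrt hq.le,
    show 1 - y ^ 2 = (1 + y) * (1 - y) by ring, Real.sqrt_mul hp.le]
  have hpq : √(1 + y) ^ 2 + √(1 - y) ^ 2 = 2 := by
    rw [Real.sq_sqrt hp.le, Real.sq_sqrt hq.le]; ring
  have hp' := Real.sqrt_pos.mpr hp
  have hq' := Real.sqrt_pos.mpr hq
  set p := √(1 + y)
  set q := √(1 - y)
  rw [show y + 1 = p ^ 2 by rw [Real.sq_sqrt hp.le]; ring,
    show y - 1 = -q ^ 2 by rw [Real.sq_sqrt hq.le]; ring]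
  constructor
  · field_simp
    linear_combination 2 * ρ y ^ 3 * hpq
  · field_simp
    linear_combination -2 * ρ y ^ 3 * hpq

lemma solvesS_one_one_of_hasDerivAt {ρ : ℝ → ℝ} {U V : ℝ → ℂ} {J : Set ℝ} (hJ : IsOpen J)
    (hJ₁ : J ⊆ Ioo (-1) 1) (hρ : ∀ y ∈ J, HasDerivAt ρ (-2 * ρ y ^ 3 / √(1 - y ^ 2) ^ 3) y)
    (hU : ∀ y, U y = (((1 + y) ^ (-(1 / 2) : ℝ) * ρ y : ℝ) : ℂ))
    (hV : ∀ y, V y = -I * (((1 - y) ^ (-(1 / 2) : ℝ) * ρ y : ℝ) : ℂ)) :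
    SolvesS 1 1 U V J := by
  have hw : ∀ y ∈ J, 0 < 1 - y ^ 2 := fun y hy => by nlinarith [(hJ₁ hy).1, (hJ₁ hy).2]
  have hρc : ContinuousOn ρ J := fun y hy => (hρ y hy).continuousAt.continuousWithinAt
  have hρ₁ : ContDiffOn ℝ 1 ρ J := contDiffOn_one_of_hasDerivAt hJ hρ <|
    (continuousOn_const.mul (hρc.pow 3)).div (by fun_prop) fun y hy =>
      (pow_pos (Real.sqrt_pos.mpr (hw y hy)) 3).ne'
  refine solvesS_one_one_of_real hJ hU hV ?_ ?_
    fun y hy => real_system_of_hasDerivAt (fun _ => rfl) (fun _ => rfl) (hJ₁ hy) (hρ y hy)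
  · refine (ContDiffOn.rpow_const_of_ne (by fun_prop) fun y hy => ?_).mul hρ₁
    linarith [(hJ₁ hy).1]
  · refine (ContDiffOn.rpow_const_of_ne (by fun_prop) fun y hy => ?_).mul hρ₁
    linarith [(hJ₁ hy).2]

noncomputable def profileBase (ξ₀ y : ℝ) : ℝ :=
  1 + 4 * ξ₀ ^ 2 * y * (1 - y ^ 2) ^ (-(1 / 2) : ℝ)

lemma hasDerivAt_profileBase (ξ₀ : ℝ) {y : ℝ} (hy : y ∈ Ioo (-1 : ℝ) 1) :
    HasDerivAt (profileBase ξ₀) (4 * ξ₀ ^ 2 / √(1 - y ^ 2) ^ 3) y := by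
  have hw : 0 < 1 - y ^ 2 := by nlinarith [hy.1, hy.2]
  have hpow : HasDerivAt (fun t : ℝ => (1 - t ^ 2) ^ (-(1 / 2) : ℝ))
      (-(2 * y) * (-(1 / 2)) * (1 - y ^ 2) ^ (-(1 / 2) - 1 : ℝ)) y := by
    simpa using ((hasDerivAt_pow 2 y).const_sub 1).rpow_const (p := -(1 / 2)) (Or.inl hw.ne')
  refine ((((hasDerivAt_id' y).const_mul (4 * ξ₀ ^ 2)).mul hpow).const_add 1).congr_deriv ?_
  rw [rpow_neg_one_half_sub_one_eq_inv_sqrt_pow_three hw, rpow_neg_one_half_eq_inv_sqrt hw.le]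
  have hs : 0 < √(1 - y ^ 2) := Real.sqrt_pos.mpr hw
  have hs2 : √(1 - y ^ 2) ^ 2 = 1 - y ^ 2 := Real.sq_sqrt hw.le
  field_simp
  linear_combination ξ₀ ^ 2 * hs2

lemma strictMonoOn_profileBase {ξ₀ : ℝ} (hξ₀ : ξ₀ ≠ 0) :
    StrictMonoOn (profileBase ξ₀) (Ioo (-1) 1) := by
  refine strictMonoOn_of_deriv_pos (convex_Ioo _ _)
    (fun y hy => (hasDerivAt_profileBase ξ₀ hy).continuousAt.continuousWithinAt) fun y hy => ?_
  rw [interior_Ioo] at hy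
  have hw : 0 < 1 - y ^ 2 := by nlinarith [hy.1, hy.2]
  rw [(hasDerivAt_profileBase ξ₀ hy).deriv]
  have hs := Real.sqrt_pos.mpr hw
  positivity

lemma neg_inv_sqrt_mem_Ioo {ξ₀ : ℝ} (hξ₀ : ξ₀ ≠ 0) :
    -1 / √(1 + 16 * ξ₀ ^ 4) ∈ Ioo (-1 : ℝ) 0 := by
  have hc : 1 < √(1 + 16 * ξ₀ ^ 4) :=
    Real.lt_sqrt_of_sq_lt (by have := pow_pos (sq_pos_of_ne_zero hξ₀) 2; nlinarith)
  constructor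
  · rw [lt_div_iff₀ (by linarith)]; linarith
  · exact div_neg_of_neg_of_pos (by norm_num) (by linarith)

lemma profileBase_neg_inv_sqrt {ξ₀ : ℝ} (hξ₀ : ξ₀ ≠ 0) :
    profileBase ξ₀ (-1 / √(1 + 16 * ξ₀ ^ 4)) = 0 := by
  set c := √(1 + 16 * ξ₀ ^ 4)
  have hc : 0 < c := Real.sqrt_pos.mpr (by positivity)
  have hc2 : c ^ 2 = 1 + 16 * ξ₀ ^ 4 := Real.sq_sqrt (by positivity)
  have hw : 1 - (-1 / c) ^ 2 = (4 * ξ₀ ^ 2 / c) ^ 2 := by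
    field_simp
    linear_combination hc2
  rw [profileBase, hw, rpow_neg_one_half_eq_inv_sqrt (sq_nonneg _),
    Real.sqrt_sq (by positivity)]
  field_simp
  ring

lemma hasDerivAt_mul_profileBase_rpow (ξ₀ : ℝ) {y : ℝ} (hy : y ∈ Ioo (-1 : ℝ) 1)
    (hA : 0 < profileBase ξ₀ y) :
    HasDerivAt (fun t => ξ₀ * profileBase ξ₀ t ^ (-(1 / 2) : ℝ))
      (-2 * (ξ₀ * profileBase ξ₀ y ^ (-(1 / 2) : ℝ)) ^ 3 / √(1 - y ^ 2) ^ 3) y := by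
  refine (((hasDerivAt_profileBase ξ₀ hy).rpow_const (Or.inl hA.ne')).const_mul ξ₀).congr_deriv ?_
  rw [rpow_neg_one_half_sub_one_eq_inv_sqrt_pow_three hA, rpow_neg_one_half_eq_inv_sqrt hA.le]
  ring

/-- for `k = ℓ = 1` (`p = 1`), with `y₀ = -1/√(1 + 16ξ₀⁴)` (the unique
root in `(-1,0)` of `1 + 4ξ₀² y (1-y²)^{-1/2} = 0`), the pair
`U(y) = (1+y)^{-1/2} ρ(y)`, `V(y) = -i (1-y)^{-1/2} ρ(y)` with
`ρ(y) = ξ₀ (1 + 4ξ₀² y (1-y²)^{-1/2})^{-1/2}` solves the self-similar system (S)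
on `(y₀, 1)` and satisfies `|U(0)| = |V(0)| = ξ₀`. -/
theorem explicit_selfsimilar_solution (ξ₀ : ℝ) (hξ₀ : 0 < ξ₀) (y₀ : ℝ)
    (hy₀ : y₀ = -1 / Real.sqrt (1 + 16 * ξ₀ ^ 4))
    (ρ : ℝ → ℝ)
    (hρ : ∀ y, ρ y = ξ₀ * (1 + 4 * ξ₀ ^ 2 * y * (1 - y ^ 2) ^ (-(1 / 2) : ℝ)) ^ (-(1 / 2) : ℝ))
    (U V : ℝ → ℂ)
    (hU : ∀ y, U y = (((1 + y) ^ (-(1 / 2) : ℝ) * ρ y : ℝ) : ℂ))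
    (hV : ∀ y, V y = -Complex.I * (((1 - y) ^ (-(1 / 2) : ℝ) * ρ y : ℝ) : ℂ)) :
    (y₀ ∈ Ioo (-1 : ℝ) 0 ∧
      ∀ y ∈ Ioo (-1 : ℝ) 0,
        (1 + 4 * ξ₀ ^ 2 * y * (1 - y ^ 2) ^ (-(1 / 2) : ℝ) = 0 ↔ y = y₀)) ∧
    SolvesS 1 1 U V (Ioo y₀ 1) ∧
    ‖U 0‖ = ξ₀ ∧ ‖V 0‖ = ξ₀ := by
  obtain rfl : ρ = fun y => ξ₀ * profileBase ξ₀ y ^ (-(1 / 2) : ℝ) := funext hρ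
  have hmono := strictMonoOn_profileBase hξ₀.ne'
  have hy₀mem : y₀ ∈ Ioo (-1 : ℝ) 0 := hy₀ ▸ neg_inv_sqrt_mem_Ioo hξ₀.ne'
  have hroot : profileBase ξ₀ y₀ = 0 := hy₀ ▸ profileBase_neg_inv_sqrt hξ₀.ne'
  have hy₀₁ : y₀ ∈ Ioo (-1 : ℝ) 1 := ⟨hy₀mem.1, hy₀mem.2.trans one_pos⟩
  have hJ : Ioo y₀ 1 ⊆ Ioo (-1) 1 := Ioo_subset_Ioo_left hy₀mem.1.le
  have hbase_zero : profileBase ξ₀ 0 = 1 := by simp [profileBase]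
  refine ⟨⟨hy₀mem, fun y hy => ?_⟩, ?_, ?_, ?_⟩
  · have hy₁ : y ∈ Ioo (-1 : ℝ) 1 := ⟨hy.1, hy.2.trans one_pos⟩
    exact ⟨fun h => hmono.injOn hy₁ hy₀₁ (h.trans hroot.symm), fun h => h ▸ hroot⟩
  · refine solvesS_one_one_of_hasDerivAt isOpen_Ioo hJ (fun y hy => ?_) hU hV
    exact hasDerivAt_mul_profileBase_rpow ξ₀ (hJ hy) (hroot ▸ hmono hy₀₁ (hJ hy) hy.1)
  · simp [hU, hbase_zero, hξ₀.le]
  · simp [hV, hbase_zero, hξ₀.le]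
end

section
/- Let ξ₀ > 0, let y₀ := −1/√(1 + 16·ξ₀⁴), and for y ∈ (y₀, 1) define ρ(y) := ξ₀·(1 + 4·ξ₀²·y·(1−y²)^(−1/2))^(−1/2), U(y) := (1+y)^(−1/2)·ρ(y), and V(y) := −i·(1−y)^(−1/2)·ρ(y). Then (1−y)^(−1/4)·|U(y)| → 2^(−5/4) and (1−y)^(1/4)·|V(y)| → 2^(−3/4) as y → 1 from the left; in particular U(y) → 0 while V(y) is unbounded as y → 1, with the self-similar scaling rates |U(y)| ∼ (1−y)^(1/4) and |V(y)| ∼ (1−y)^(−1/4). -/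
open Set Complex Filter Topology

/-!
Multiplying `ρ(y)` by `(1 - y)^(-1/4)` absorbs the singular factor `(1 - y)^(-1/2)` of
`(1 - y²)^(-1/2)`: for `0 ≤ y < 1` it equals
`ξ₀ ((1 - y)^(1/2) + 4 ξ₀² y (1 + y)^(-1/2))^(-1/2)`, which is continuous at `y = 1` with
value `ξ₀ (2^(3/2) ξ₀²)^(-1/2) = 2^(-3/4)`. Hence `ρ(y) ∼ 2^(-3/4) (1 - y)^(1/4)`, and
`|U| = (1 + y)^(-1/2) ρ`, `|V| = (1 - y)^(-1/2) ρ` give both rates; `U → 0` and `|V| → ∞`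
follow since `(1 - y)^(±1/4)` tends to `0` and `∞`.
-/

lemma tendsto_const_sub_nhdsLT (a : ℝ) :
    Tendsto (fun y : ℝ => a - y) (𝓝[<] a) (𝓝[>] 0) := by
  refine tendsto_nhdsWithin_of_tendsto_nhds_of_eventually_within _ ?_ ?_
  · have : Tendsto (fun y : ℝ => a - y) (𝓝 a) (𝓝 (a - a)) :=
      tendsto_const_nhds.sub tendsto_id
    simpa using this.mono_left nhdsWithin_le_nhds
  · filter_upwards [self_mem_nhdsWithin] with y (hy : y < a)
    exact sub_pos.2 hy

lemma rpow_mul_rpow_neg_mul_cancel {x : ℝ} (hx : 0 < x) (p c : ℝ) :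
    x ^ p * (x ^ (-p) * c) = c := by
  rw [← mul_assoc, ← Real.rpow_add hx, add_neg_cancel, Real.rpow_zero, one_mul]

section SubRpow

variable {a p L : ℝ} {f : ℝ → ℝ}

lemma tendsto_zero_of_tendsto_sub_rpow_neg_mul (hp : 0 < p)
    (hf : Tendsto (fun y => (a - y) ^ (-p) * f y) (𝓝[<] a) (𝓝 L)) :
    Tendsto f (𝓝[<] a) (𝓝 0) := by
  have hzero : Tendsto (fun y : ℝ => (a - y) ^ p) (𝓝[<] a) (𝓝 0) := by
    simpa [Real.zero_rpow hp.ne'] using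
      ((tendsto_const_sub_nhdsLT a).mono_right nhdsWithin_le_nhds).rpow_const (Or.inr hp.le)
  refine (zero_mul L ▸ hzero.mul hf).congr' ?_
  filter_upwards [self_mem_nhdsWithin] with y (hy : y < a)
  exact rpow_mul_rpow_neg_mul_cancel (sub_pos.2 hy) p (f y)

lemma tendsto_atTop_of_tendsto_sub_rpow_mul (hp : 0 < p) (hL : 0 < L)
    (hf : Tendsto (fun y => (a - y) ^ p * f y) (𝓝[<] a) (𝓝 L)) :
    Tendsto f (𝓝[<] a) atTop := by
  have hinfty : Tendsto (fun y : ℝ => (a - y) ^ (-p)) (𝓝[<] a) atTop :=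
    (tendsto_rpow_neg_nhdsGT_zero (neg_lt_zero.2 hp)).comp (tendsto_const_sub_nhdsLT a)
  refine (hinfty.atTop_mul_pos hL hf).congr' ?_
  filter_upwards [self_mem_nhdsWithin] with y (hy : y < a)
  simpa using rpow_mul_rpow_neg_mul_cancel (sub_pos.2 hy) (-p) (f y)

end SubRpow

noncomputable def profileAmplitude (ξ y : ℝ) : ℝ :=
  ξ * (1 + 4 * ξ ^ 2 * y * (1 - y ^ 2) ^ (-(1 / 2) : ℝ)) ^ (-(1 / 2) : ℝ)

noncomputable def rescaledProfileAmplitude (ξ y : ℝ) : ℝ :=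
  ξ * ((1 - y) ^ (1 / 2 : ℝ) + 4 * ξ ^ 2 * y * (1 + y) ^ (-(1 / 2) : ℝ)) ^ (-(1 / 2) : ℝ)

section ProfileAmplitude

variable {ξ y : ℝ}

lemma profileAmplitude_nonneg (hξ : 0 ≤ ξ) (hy₀ : 0 ≤ y) (hy₁ : y ≤ 1) :
    0 ≤ profileAmplitude ξ y := by
  have : 0 ≤ 1 - y ^ 2 := by nlinarith
  unfold profileAmplitude
  positivity

lemma one_sub_rpow_neg_quarter_mul_profileAmplitude (hy₀ : 0 ≤ y) (hy₁ : y < 1) :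
    (1 - y) ^ (-(1 / 4) : ℝ) * profileAmplitude ξ y = rescaledProfileAmplitude ξ y := by
  have hsub : 0 < 1 - y := sub_pos.2 hy₁
  have hadd : 0 < 1 + y := by linarith
  have hbase : 0 ≤ 1 + 4 * ξ ^ 2 * y * (1 - y ^ 2) ^ (-(1 / 2) : ℝ) := by
    have : 0 ≤ 1 - y ^ 2 := by nlinarith
    positivity
  have hcancel : (1 - y) ^ (1 / 2 : ℝ) * (1 + 4 * ξ ^ 2 * y * (1 - y ^ 2) ^ (-(1 / 2) : ℝ))
      = (1 - y) ^ (1 / 2 : ℝ) + 4 * ξ ^ 2 * y * (1 + y) ^ (-(1 / 2) : ℝ) := by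
    have hinv : (1 - y) ^ (1 / 2 : ℝ) * (1 - y) ^ (-(1 / 2) : ℝ) = 1 := by
      rw [← Real.rpow_add hsub]; norm_num
    rw [show 1 - y ^ 2 = (1 - y) * (1 + y) by ring, Real.mul_rpow hsub.le hadd.le]
    linear_combination (4 * ξ ^ 2 * y * (1 + y) ^ (-(1 / 2) : ℝ)) * hinv
  have hquarter : ((1 - y) ^ (1 / 2 : ℝ)) ^ (-(1 / 2) : ℝ) = (1 - y) ^ (-(1 / 4) : ℝ) := by
    rw [← Real.rpow_mul hsub.le]; norm_num
  rw [rescaledProfileAmplitude, ← hcancel, Real.mul_rpow (by positivity) hbase, hquarter,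
    profileAmplitude]
  ring

lemma continuousAt_rescaledProfileAmplitude_one (hξ : 0 < ξ) :
    ContinuousAt (rescaledProfileAmplitude ξ) 1 := by
  unfold rescaledProfileAmplitude
  fun_prop (disch := first | (left; positivity) | norm_num)

lemma rescaledProfileAmplitude_one (hξ : 0 < ξ) :
    rescaledProfileAmplitude ξ 1 = 2 ^ (-(3 / 4) : ℝ) := by
  have h4 : (4 : ℝ) * (1 + 1) ^ (-(1 / 2) : ℝ) = 2 ^ (3 / 2 : ℝ) := by
    rw [show (4 : ℝ) = 2 ^ (2 : ℝ) by norm_num, one_add_one_eq_two, ← Real.rpow_add two_pos]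
    norm_num
  calc rescaledProfileAmplitude ξ 1
      = ξ * (ξ ^ (2 : ℝ) * 2 ^ (3 / 2 : ℝ)) ^ (-(1 / 2) : ℝ) := by
        rw [rescaledProfileAmplitude, ← h4, Real.rpow_two, sub_self,
          Real.zero_rpow (by norm_num), zero_add]
        ring_nf
    _ = ξ * ξ ^ (-1 : ℝ) * 2 ^ (-(3 / 4) : ℝ) := by
        rw [Real.mul_rpow (by positivity) (by positivity), ← Real.rpow_mul hξ.le,
          ← Real.rpow_mul two_pos.le, mul_assoc]
        norm_num
    _ = 2 ^ (-(3 / 4) : ℝ) := by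
        rw [Real.rpow_neg_one, mul_inv_cancel₀ hξ.ne', one_mul]

lemma tendsto_one_sub_rpow_neg_quarter_mul_profileAmplitude (hξ : 0 < ξ) :
    Tendsto (fun y => (1 - y) ^ (-(1 / 4) : ℝ) * profileAmplitude ξ y) (𝓝[<] 1)
      (𝓝 (2 ^ (-(3 / 4) : ℝ))) := by
  rw [← rescaledProfileAmplitude_one hξ]
  refine ((continuousAt_rescaledProfileAmplitude_one hξ).tendsto.mono_left
    nhdsWithin_le_nhds).congr' ?_
  filter_upwards [Ioo_mem_nhdsLT zero_lt_one] with y hy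
  exact (one_sub_rpow_neg_quarter_mul_profileAmplitude hy.1.le hy.2).symm

lemma tendsto_one_sub_rpow_neg_quarter_mul_one_add_rpow_mul_profileAmplitude (hξ : 0 < ξ) :
    Tendsto
      (fun y => (1 - y) ^ (-(1 / 4) : ℝ) * ((1 + y) ^ (-(1 / 2) : ℝ) * profileAmplitude ξ y))
      (𝓝[<] 1) (𝓝 (2 ^ (-(5 / 4) : ℝ))) := by
  have hcont : ContinuousAt (fun y : ℝ => (1 + y) ^ (-(1 / 2) : ℝ)) 1 := by
    fun_prop (disch := norm_num)
  have hlim := (hcont.tendsto.mono_left nhdsWithin_le_nhds).mul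
    (tendsto_one_sub_rpow_neg_quarter_mul_profileAmplitude hξ)
  rw [one_add_one_eq_two, ← Real.rpow_add two_pos] at hlim
  norm_num at hlim
  exact hlim.congr fun y => by ring

lemma tendsto_one_sub_rpow_quarter_mul_one_sub_rpow_mul_profileAmplitude (hξ : 0 < ξ) :
    Tendsto
      (fun y => (1 - y) ^ (1 / 4 : ℝ) * ((1 - y) ^ (-(1 / 2) : ℝ) * profileAmplitude ξ y))
      (𝓝[<] 1) (𝓝 (2 ^ (-(3 / 4) : ℝ))) := by
  refine (tendsto_one_sub_rpow_neg_quarter_mul_profileAmplitude hξ).congr' ?_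
  filter_upwards [self_mem_nhdsWithin] with y (hy : y < 1)
  rw [← mul_assoc, ← Real.rpow_add (sub_pos.2 hy)]
  norm_num

end ProfileAmplitude

theorem explicit_solution_asymptotics_at_one_general (ξ₀ : ℝ) (hξ₀ : 0 < ξ₀)
    (ρ : ℝ → ℝ)
    (hρ : ∀ y, ρ y = ξ₀ * (1 + 4 * ξ₀ ^ 2 * y * (1 - y ^ 2) ^ (-(1 / 2) : ℝ)) ^ (-(1 / 2) : ℝ))
    (U V : ℝ → ℂ)
    (hU : ∀ y, U y = (((1 + y) ^ (-(1 / 2) : ℝ) * ρ y : ℝ) : ℂ))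
    (hV : ∀ y, V y = -Complex.I * (((1 - y) ^ (-(1 / 2) : ℝ) * ρ y : ℝ) : ℂ)) :
    Tendsto (fun y : ℝ => (1 - y) ^ (-(1 / 4) : ℝ) * ‖U y‖)
      (nhdsWithin 1 (Iio 1)) (nhds ((2 : ℝ) ^ (-(5 / 4) : ℝ))) ∧
    Tendsto (fun y : ℝ => (1 - y) ^ ((1 / 4) : ℝ) * ‖V y‖)
      (nhdsWithin 1 (Iio 1)) (nhds ((2 : ℝ) ^ (-(3 / 4) : ℝ))) ∧
    Tendsto U (nhdsWithin 1 (Iio 1)) (nhds 0) ∧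
    Tendsto (fun y : ℝ => ‖V y‖) (nhdsWithin 1 (Iio 1)) atTop := by
  obtain rfl : ρ = profileAmplitude ξ₀ := funext hρ
  have hnorms : ∀ᶠ y in 𝓝[<] (1 : ℝ),
      ‖U y‖ = (1 + y) ^ (-(1 / 2) : ℝ) * profileAmplitude ξ₀ y ∧
      ‖V y‖ = (1 - y) ^ (-(1 / 2) : ℝ) * profileAmplitude ξ₀ y := by
    filter_upwards [Ioo_mem_nhdsLT zero_lt_one] with y hy
    have hρ_nonneg := profileAmplitude_nonneg hξ₀.le hy.1.le hy.2.le
    constructor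
    · rw [hU, Complex.norm_real, Real.norm_of_nonneg
        (mul_nonneg (Real.rpow_nonneg (by linarith [hy.1]) _) hρ_nonneg)]
    · rw [hV, norm_mul, norm_neg, Complex.norm_I, one_mul, Complex.norm_real, Real.norm_of_nonneg
        (mul_nonneg (Real.rpow_nonneg (sub_nonneg.2 hy.2.le) _) hρ_nonneg)]
  have hU_lim : Tendsto (fun y : ℝ => (1 - y) ^ (-(1 / 4) : ℝ) * ‖U y‖) (𝓝[<] 1)
      (𝓝 ((2 : ℝ) ^ (-(5 / 4) : ℝ))) :=
    (tendsto_one_sub_rpow_neg_quarter_mul_one_add_rpow_mul_profileAmplitude hξ₀).congr'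
      (hnorms.mono fun y hy => by simp only [hy.1])
  have hV_lim : Tendsto (fun y : ℝ => (1 - y) ^ (1 / 4 : ℝ) * ‖V y‖) (𝓝[<] 1)
      (𝓝 ((2 : ℝ) ^ (-(3 / 4) : ℝ))) :=
    (tendsto_one_sub_rpow_quarter_mul_one_sub_rpow_mul_profileAmplitude hξ₀).congr'
      (hnorms.mono fun y hy => by simp only [hy.2])
  exact ⟨hU_lim, hV_lim,
    tendsto_zero_iff_norm_tendsto_zero.2
      (tendsto_zero_of_tendsto_sub_rpow_neg_mul (by norm_num) hU_lim),
    tendsto_atTop_of_tendsto_sub_rpow_mul (by norm_num) (by positivity) hV_lim⟩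

/-- asymptotics of the explicit self-similar profile as `y → 1⁻`:
`(1-y)^{-1/4} |U(y)| → 2^{-5/4}` and `(1-y)^{1/4} |V(y)| → 2^{-3/4}`;
in particular `U(y) → 0` while `|V(y)| → +∞`, realizing the self-similar rates
`|U| ∼ (1-y)^{1/4}` and `|V| ∼ (1-y)^{-1/4}`. -/
theorem explicit_solution_asymptotics_at_one (ξ₀ : ℝ) (hξ₀ : 0 < ξ₀) (y₀ : ℝ)
    (hy₀ : y₀ = -1 / Real.sqrt (1 + 16 * ξ₀ ^ 4))
    (ρ : ℝ → ℝ)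
    (hρ : ∀ y, ρ y = ξ₀ * (1 + 4 * ξ₀ ^ 2 * y * (1 - y ^ 2) ^ (-(1 / 2) : ℝ)) ^ (-(1 / 2) : ℝ))
    (U V : ℝ → ℂ)
    (hU : ∀ y, U y = (((1 + y) ^ (-(1 / 2) : ℝ) * ρ y : ℝ) : ℂ))
    (hV : ∀ y, V y = -Complex.I * (((1 - y) ^ (-(1 / 2) : ℝ) * ρ y : ℝ) : ℂ)) :
    Tendsto (fun y : ℝ => (1 - y) ^ (-(1 / 4) : ℝ) * ‖U y‖)
      (nhdsWithin 1 (Iio 1)) (nhds ((2 : ℝ) ^ (-(5 / 4) : ℝ))) ∧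
    Tendsto (fun y : ℝ => (1 - y) ^ ((1 / 4) : ℝ) * ‖V y‖)
      (nhdsWithin 1 (Iio 1)) (nhds ((2 : ℝ) ^ (-(3 / 4) : ℝ))) ∧
    Tendsto U (nhdsWithin 1 (Iio 1)) (nhds 0) ∧
    Tendsto (fun y : ℝ => ‖V y‖) (nhdsWithin 1 (Iio 1)) atTop :=
  explicit_solution_asymptotics_at_one_general ξ₀ hξ₀ ρ hρ U V hU hV
end

section
/- Let ξ₀ > 0, let y₀ := −1/√(1 + 16·ξ₀⁴) ∈ (−1, 0), and for y ∈ (y₀, 1) define ρ(y) := ξ₀·(1 + 4·ξ₀²·y·(1−y²)^(−1/2))^(−1/2), U(y) := (1+y)^(−1/2)·ρ(y), and V(y) := −i·(1−y)^(−1/2)·ρ(y). Then |U(y)| → +∞ and |V(y)| → +∞ as y → y₀ from the right; in particular, this solution of the self-similar system (S) with k = ℓ = 1 does not extend to a bounded solution on any interval (a, 1) with a < y₀. -/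
open Set Complex Filter Topology

lemma neg_one_div_sqrt_one_add_mem_Ioo {t : ℝ} (ht : 0 < t) :
    -1 / Real.sqrt (1 + t) ∈ Ioo (-1 : ℝ) 0 := by
  have hs : 1 < Real.sqrt (1 + t) := by
    rw [Real.lt_sqrt zero_le_one]
    linarith
  constructor
  · rw [neg_div, neg_lt_neg_iff, div_lt_one (by positivity)]
    exact hs
  · rw [neg_div, neg_lt_zero]
    positivity

lemma profileBase_strictMonoOn {ξ₀ : ℝ} (hξ₀ : ξ₀ ≠ 0) :
    StrictMonoOn (profileBase ξ₀) (Ioc (-1) 0) := by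
  intro y hy z hz hyz
  have hsq : z ^ 2 < y ^ 2 := by nlinarith [hy.1, hz.2]
  have hz_pos : 0 < 1 - z ^ 2 := by nlinarith [hy.1, hz.2]
  have hy_pos : 0 < 1 - y ^ 2 := by nlinarith [hy.1, hz.2]
  have hrpow : (1 - z ^ 2) ^ (-(1 / 2) : ℝ) < (1 - y ^ 2) ^ (-(1 / 2) : ℝ) :=
    Real.rpow_lt_rpow_of_neg hy_pos (by linarith) (by norm_num)
  have hz_rpow : 0 < (1 - z ^ 2) ^ (-(1 / 2) : ℝ) := Real.rpow_pos_of_pos hz_pos _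
  have hξ_sq : 0 < 4 * ξ₀ ^ 2 := by positivity
  have key : (-z) * (1 - z ^ 2) ^ (-(1 / 2) : ℝ) < (-y) * (1 - y ^ 2) ^ (-(1 / 2) : ℝ) := by
    nlinarith [hz.2]
  unfold profileBase
  nlinarith

lemma profileBase_neg_one_div_sqrt {ξ₀ : ℝ} (hξ₀ : ξ₀ ≠ 0) :
    profileBase ξ₀ (-1 / Real.sqrt (1 + 16 * ξ₀ ^ 4)) = 0 := by
  set s := Real.sqrt (1 + 16 * ξ₀ ^ 4)
  have hs : 0 < s := Real.sqrt_pos.mpr (by positivity)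
  have hs_sq : s ^ 2 = 1 + 16 * ξ₀ ^ 4 := Real.sq_sqrt (by positivity)
  have h_one_sub : 1 - (-1 / s) ^ 2 = (4 * ξ₀ ^ 2 / s) ^ 2 := by
    field_simp
    linarith
  rw [profileBase, h_one_sub, Real.rpow_neg (by positivity), ← Real.sqrt_eq_rpow,
    Real.sqrt_sq (by positivity)]
  field_simp
  ring

lemma tendsto_profileBase_nhdsGT {ξ₀ : ℝ} (hξ₀ : ξ₀ ≠ 0) :
    Tendsto (profileBase ξ₀) (𝓝[>] (-1 / Real.sqrt (1 + 16 * ξ₀ ^ 4))) (𝓝[>] 0) := by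
  set y₀ := -1 / Real.sqrt (1 + 16 * ξ₀ ^ 4)
  have hy₀ : y₀ ∈ Ioo (-1 : ℝ) 0 := neg_one_div_sqrt_one_add_mem_Ioo (by positivity)
  have h_zero : profileBase ξ₀ y₀ = 0 := profileBase_neg_one_div_sqrt hξ₀
  have hcont : ContinuousAt (profileBase ξ₀) y₀ := by
    have : 1 - y₀ ^ 2 ≠ 0 := by nlinarith [hy₀.1, hy₀.2]
    unfold profileBase
    fun_prop (disch := exact Or.inl this)
  refine tendsto_nhdsWithin_iff.mpr ⟨?_, ?_⟩
  · simpa only [h_zero] using hcont.tendsto.mono_left nhdsWithin_le_nhds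
  · filter_upwards [Ioc_mem_nhdsGT hy₀.2] with y hy
    rw [← h_zero]
    exact profileBase_strictMonoOn hξ₀ ⟨hy₀.1, hy₀.2.le⟩ ⟨hy₀.1.trans hy.1, hy.2⟩ hy.1

lemma tendsto_abs_rpow_neg_half_mul_atTop {l : Filter ℝ} {g f : ℝ → ℝ} {c : ℝ} (hc : 0 < c)
    (hg : Tendsto g l (𝓝 c)) (hf : Tendsto f l atTop) :
    Tendsto (fun y => |g y ^ (-(1 / 2) : ℝ) * f y|) l atTop :=
  tendsto_abs_atTop_atTop.comp <|
    (hg.rpow_const (Or.inl hc.ne')).pos_mul_atTop (Real.rpow_pos_of_pos hc _) hf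

/-- the explicit self-similar profile blows up at `y₀`:
`|U(y)| → +∞` and `|V(y)| → +∞` as `y → y₀⁺`; in particular it does not extend
to a bounded solution of (S) on any interval `(a, 1)` with `a < y₀`. -/
theorem explicit_solution_blowup_at_y0 (ξ₀ : ℝ) (hξ₀ : 0 < ξ₀) (y₀ : ℝ)
    (hy₀ : y₀ = -1 / Real.sqrt (1 + 16 * ξ₀ ^ 4))
    (ρ : ℝ → ℝ)
    (hρ : ∀ y, ρ y = ξ₀ * (1 + 4 * ξ₀ ^ 2 * y * (1 - y ^ 2) ^ (-(1 / 2) : ℝ)) ^ (-(1 / 2) : ℝ))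
    (U V : ℝ → ℂ)
    (hU : ∀ y, U y = (((1 + y) ^ (-(1 / 2) : ℝ) * ρ y : ℝ) : ℂ))
    (hV : ∀ y, V y = -Complex.I * (((1 - y) ^ (-(1 / 2) : ℝ) * ρ y : ℝ) : ℂ)) :
    y₀ ∈ Ioo (-1 : ℝ) 0 ∧
    Tendsto (fun y : ℝ => ‖U y‖) (nhdsWithin y₀ (Ioi y₀)) atTop ∧
    Tendsto (fun y : ℝ => ‖V y‖) (nhdsWithin y₀ (Ioi y₀)) atTop ∧
    ∀ a : ℝ, -1 ≤ a → a < y₀ → ∀ W Z : ℝ → ℂ,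
      SolvesS 1 1 W Z (Ioo a 1) →
      (∀ y ∈ Ioo y₀ 1, W y = U y ∧ Z y = V y) →
      ¬ ∃ M : ℝ, ∀ y ∈ Ioo a 1, ‖W y‖ ≤ M ∧ ‖Z y‖ ≤ M := by
  have hy₀_mem : y₀ ∈ Ioo (-1 : ℝ) 0 := hy₀ ▸ neg_one_div_sqrt_one_add_mem_Ioo (by positivity)
  have hρ_top : Tendsto ρ (𝓝[>] y₀) atTop := by
    rw [funext hρ, hy₀]
    exact ((tendsto_rpow_neg_nhdsGT_zero (by norm_num)).comp
      (tendsto_profileBase_nhdsGT hξ₀.ne')).const_mul_atTop hξ₀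
  have hU_top : Tendsto (fun y => ‖U y‖) (𝓝[>] y₀) atTop := by
    simp only [hU, Complex.norm_real, Real.norm_eq_abs]
    exact tendsto_abs_rpow_neg_half_mul_atTop (c := 1 + y₀) (by linarith [hy₀_mem.1])
      (tendsto_nhdsWithin_of_tendsto_nhds (tendsto_const_nhds.add tendsto_id)) hρ_top
  have hV_top : Tendsto (fun y => ‖V y‖) (𝓝[>] y₀) atTop := by
    simp only [hV, norm_mul, norm_neg, Complex.norm_I, one_mul, Complex.norm_real,
      Real.norm_eq_abs, ← abs_mul]
    exact tendsto_abs_rpow_neg_half_mul_atTop (c := 1 - y₀) (by linarith [hy₀_mem.2])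
      (tendsto_nhdsWithin_of_tendsto_nhds (tendsto_const_nhds.sub tendsto_id)) hρ_top
  refine ⟨hy₀_mem, hU_top, hV_top, fun a _ ha W Z _ hWZ ⟨M, hM⟩ => ?_⟩
  obtain ⟨y, hMy, hy⟩ := ((hU_top.eventually_gt_atTop M).and
    (Ioo_mem_nhdsGT (by linarith [hy₀_mem.2] : y₀ < 1))).exists
  exact (hM y ⟨ha.trans hy.1, hy.2⟩).1.not_gt ((hWZ y hy).1 ▸ hMy)
end

section
/- Let k = ℓ = 1. Suppose (U, V) solves the self-similar system (S) on an open interval J ⊆ (−1,1) with 0 ∈ J, and suppose |U(0)| = |V(0)| > 0 and |Im(conj(U(0))·V(0))| < |U(0)|·|V(0)|. Then sup J < 1 and inf J > −1; that is, there is no such solution defined on an interval whose supremum is 1 or whose infimum is −1. (Every solution with |U(0)| = |V(0)| not lying on the invariant phase lines extends neither to y → 1 nor to y → −1.) -/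
open Set Complex Filter Topology

/-!
The quantity `(1 + y)|U|² - (1 - y)|V|²` is conserved, so `|U(0)| = |V(0)|` forces
`(1 + y)|U|² = (1 - y)|V|²`. Under this balance `w = √(1 - y²) · conj U · V = x + iT` obeys
`x' = -κxT`, `T' = κ(2x² + T²)` with `κ = 4 (1 - y²)^(-3/2)`, a system conserving `x²(x² + T²)`,
which is positive because the solution is off the phase lines (`x(0) ≠ 0`). So `x² + T²` is bounded
below and `T` satisfies the Riccati inequality `(1 - y) T' ≥ (T² + c²) / 2`. Then
`arctan (T / c) / c + log (1 - y) / 2` is nondecreasing on `[0, 1)`, which is impossible since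
`arctan` is bounded and `log (1 - y) → -∞`. The endpoint `-1` is reduced to `1` by the reflection
`(U, V)(y) ↦ (V, U)(-y)`.
-/

open ComplexConjugate

theorem HasDerivAt.re {f : ℝ → ℂ} {f' : ℂ} {y : ℝ} (h : HasDerivAt f f' y) :
    HasDerivAt (fun t ↦ (f t).re) f'.re y :=
  reCLM.hasFDerivAt.comp_hasDerivAt y h

theorem HasDerivAt.im {f : ℝ → ℂ} {f' : ℂ} {y : ℝ} (h : HasDerivAt f f' y) :
    HasDerivAt (fun t ↦ (f t).im) f'.im y :=
  imCLM.hasFDerivAt.comp_hasDerivAt y h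

theorem Convex.eq_of_forall_hasDerivAt_zero {E : Type*} [NormedAddCommGroup E]
    [NormedSpace ℝ E] {f : ℝ → E} {s : Set ℝ} (hs : Convex ℝ s)
    (hf : ∀ y ∈ s, HasDerivAt f 0 y) {x y : ℝ} (hx : x ∈ s) (hy : y ∈ s) : f x = f y := by
  have := hs.norm_image_sub_le_of_norm_hasDerivWithin_le (f' := fun _ ↦ 0)
    (fun z hz ↦ (hf z hz).hasDerivWithinAt) (fun _ _ ↦ norm_zero.le) hx hy
  rw [zero_mul, norm_le_zero_iff, sub_eq_zero] at this
  exact this.symm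

theorem tendsto_log_one_sub_nhdsLT_one :
    Tendsto (fun y ↦ Real.log (1 - y)) (𝓝[<] 1) atBot := by
  refine Real.tendsto_log_nhdsGT_zero.comp (tendsto_nhdsWithin_iff.2 ⟨?_, ?_⟩)
  · exact ((continuous_const.sub continuous_id).tendsto' 1 0 (sub_self 1)).mono_left
      nhdsWithin_le_nhds
  · filter_upwards [self_mem_nhdsWithin] with y (hy : y < 1) using sub_pos.2 hy

theorem riccati_blowup {T T' : ℝ → ℝ} {y₀ κ c : ℝ} (hy₀ : y₀ < 1) (hκ : 0 < κ) (hc : 0 < c)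
    (hT : ∀ y ∈ Ico y₀ 1, HasDerivAt T (T' y) y)
    (hT' : ∀ y ∈ Ico y₀ 1, κ * (T y ^ 2 + c ^ 2) ≤ (1 - y) * T' y) : False := by
  set φ : ℝ → ℝ := fun y ↦ Real.arctan (T y / c) / c + κ * Real.log (1 - y)
  have hφ : ∀ y ∈ Ico y₀ 1, HasDerivAt φ (T' y / (c ^ 2 + T y ^ 2) - κ / (1 - y)) y := by
    intro y hy
    have hsub : HasDerivAt (fun t ↦ 1 - t) (-1) y := by
      simpa using (hasDerivAt_id y).const_sub 1
    refine ((((hT y hy).div_const c).arctan.div_const c).add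
      ((hsub.log (sub_pos.2 hy.2).ne').const_mul κ)).congr_deriv ?_
    have : 1 - y ≠ 0 := (sub_pos.2 hy.2).ne'
    field_simp
    ring
  have hmono : MonotoneOn φ (Ico y₀ 1) := by
    refine monotoneOn_of_hasDerivWithinAt_nonneg (convex_Ico y₀ 1)
      (f' := fun y ↦ T' y / (c ^ 2 + T y ^ 2) - κ / (1 - y))
      (fun y hy ↦ (hφ y hy).continuousAt.continuousWithinAt) (fun y hy ↦ ?_) (fun y hy ↦ ?_)
    all_goals rw [interior_Ico] at hy
    · exact (hφ y (Ioo_subset_Ico_self hy)).hasDerivWithinAt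
    · rw [sub_nonneg, div_le_div_iff₀ (sub_pos.2 hy.2) (by positivity)]
      linarith [hT' y (Ioo_subset_Ico_self hy)]
  obtain ⟨y, hlog, hy⟩ := (((tendsto_log_one_sub_nhdsLT_one.const_mul_atBot hκ).eventually
    (eventually_lt_atBot (φ y₀ - Real.pi / 2 / c))).and (Ico_mem_nhdsLT hy₀)).exists
  have hφy : φ y₀ ≤ φ y := hmono (left_mem_Ico.2 hy₀) hy hy.1
  have harctan : Real.arctan (T y / c) / c < Real.pi / 2 / c :=
    div_lt_div_of_pos_right (Real.arctan_lt_pi_div_two _) hc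
  simp only [φ] at hφy
  linarith

theorem planar_blowup {x T κ : ℝ → ℝ} {y₀ : ℝ} (hy₀ : y₀ < 1)
    (hx : ∀ y ∈ Ico y₀ 1, HasDerivAt x (-(κ y * x y * T y)) y)
    (hT : ∀ y ∈ Ico y₀ 1, HasDerivAt T (κ y * (2 * x y ^ 2 + T y ^ 2)) y)
    (hκ : ∀ y ∈ Ico y₀ 1, 1 ≤ (1 - y) * κ y) (hx₀ : x y₀ ≠ 0) : False := by
  set q := x y₀ ^ 2 * (x y₀ ^ 2 + T y₀ ^ 2)
  have hq : 0 < q := by positivity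
  have hconserved : ∀ y ∈ Ico y₀ 1, x y ^ 2 * (x y ^ 2 + T y ^ 2) = q := by
    refine fun y hy ↦ (convex_Ico y₀ 1).eq_of_forall_hasDerivAt_zero
      (f := fun y ↦ x y ^ 2 * (x y ^ 2 + T y ^ 2)) (fun z hz ↦ ?_) hy
      (left_mem_Ico.2 hy₀)
    refine (((hx z hz).pow 2).mul (((hx z hz).pow 2).add ((hT z hz).pow 2))).congr_deriv ?_
    simp only [Pi.add_apply, Pi.pow_apply, Nat.cast_ofNat]
    ring
  set c := √(√q)
  have hc : 0 < c := Real.sqrt_pos.2 (Real.sqrt_pos.2 hq)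
  refine riccati_blowup hy₀ one_half_pos hc hT fun y hy ↦ ?_
  have hc2 : c ^ 2 ≤ x y ^ 2 + T y ^ 2 := by
    rw [Real.sq_sqrt (Real.sqrt_nonneg q), Real.sqrt_le_iff]
    refine ⟨by positivity, ?_⟩
    rw [← hconserved y hy]
    nlinarith [sq_nonneg (T y), sq_nonneg (x y)]
  have := mul_le_mul_of_nonneg_right (hκ y hy) (by positivity : 0 ≤ 2 * x y ^ 2 + T y ^ 2)
  nlinarith [sq_nonneg (x y), sq_nonneg (T y)]

section PointwiseIdentities

variable {u v u' v' : ℂ} {a y F G : ℝ}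

theorem conj_selfSimilar_eq (hu : I * (a * u' + u / 2) = F * v + G * u) :
    -I * (a * conj u' + conj u / 2) = F * conj v + G * conj u := by
  simpa [map_ofNat] using congrArg conj hu

theorem balance_deriv_eq_zero (hu : I * ((y + 1 : ℝ) * u' + u / 2) = F * v + G * u)
    (hv : I * ((y - 1 : ℝ) * v' + v / 2) = F * u + G * v) :
    conj u * u + (1 + y) * (conj u' * u + conj u * u')
      - (-(conj v * v) + (1 - y) * (conj v' * v + conj v * v')) = 0 := by
  have hu' := conj_selfSimilar_eq hu
  have hv' := conj_selfSimilar_eq hv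
  push_cast at hu hv hu' hv'
  linear_combination (-I * conj u) * hu + (I * u) * hu' + (-I * conj v) * hv + (I * v) * hv'
    + (conj u * u + (y + 1) * (conj u * u' + u * conj u') + conj v * v
      + (y - 1) * (conj v * v' + v * conj v')) * I_sq

theorem conj_mul_deriv_eq (hu : I * ((y + 1 : ℝ) * u' + u / 2) = F * v + G * u)
    (hv : I * ((y - 1 : ℝ) * v' + v / 2) = F * u + G * v) :
    (1 - y ^ 2) * (conj u' * v + conj u * v')
      = I * F * ((1 + y) * (conj u * u) + (1 - y) * (conj v * v))
        + (2 * I * G + y) * (conj u * v) := by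
  have hu' := conj_selfSimilar_eq hu
  push_cast at hu hv hu'
  linear_combination (I * (1 - y) * v) * hu' + (I * (1 + y) * conj u) * hv
    + ((1 - y ^ 2) * (conj u' * v + conj u * v') - y * (conj u * v)) * I_sq

end PointwiseIdentities

noncomputable def weightedProduct (U V : ℝ → ℂ) (y : ℝ) : ℂ :=
  (√(1 - y ^ 2) : ℂ) * (conj (U y) * V y)

theorem hasDerivAt_weightedProduct {U V : ℝ → ℂ} {u' v' : ℂ} {y F G : ℝ}
    (hU : HasDerivAt U u' y) (hV : HasDerivAt V v' y) (hy : y ^ 2 < 1)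
    (hu : I * ((y + 1 : ℝ) * u' + U y / 2) = F * V y + G * U y)
    (hv : I * ((y - 1 : ℝ) * v' + V y / 2) = F * U y + G * V y) :
    HasDerivAt (weightedProduct U V)
      (I * (F * ((1 + y) * (conj (U y) * U y) + (1 - y) * (conj (V y) * V y))
        + 2 * G * (conj (U y) * V y)) / √(1 - y ^ 2)) y := by
  have hpos : 0 < 1 - y ^ 2 := sub_pos.2 hy
  have hs : HasDerivAt (fun t : ℝ ↦ (√(1 - t ^ 2) : ℂ))
      ((-(2 * y) / (2 * √(1 - y ^ 2)) : ℝ) : ℂ) y := by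
    refine HasDerivAt.ofReal_comp (HasDerivAt.sqrt ?_ hpos.ne')
    simpa using ((hasDerivAt_id y).pow 2).const_sub 1
  have hZ : HasDerivAt (fun t ↦ conj (U t) * V t) (conj u' * V y + conj (U y) * v') y :=
    hU.star.mul hV
  refine (hs.mul hZ).congr_deriv ?_
  have hZ' := conj_mul_deriv_eq hu hv
  have hsq : ((√(1 - y ^ 2) : ℝ) : ℂ) ^ 2 = 1 - y ^ 2 := by
    rw [← ofReal_pow, Real.sq_sqrt hpos.le]; push_cast; ring
  have hsne : ((√(1 - y ^ 2) : ℝ) : ℂ) ≠ 0 := ofReal_ne_zero.2 (Real.sqrt_pos.2 hpos).ne'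
  push_cast
  field_simp
  linear_combination hZ' + (conj (U y) * v' + V y * conj u') * hsq

namespace SolvesS

variable {U V : ℝ → ℂ} {J : Set ℝ}

theorem hasDerivAt {k l : ℕ} (hS : SolvesS k l U V J) (hJ : IsOpen J) {y : ℝ} (hy : y ∈ J) :
    HasDerivAt U (deriv U y) y ∧ HasDerivAt V (deriv V y) y :=
  ⟨((hS.1.differentiableOn one_ne_zero).differentiableAt (hJ.mem_nhds hy)).hasDerivAt,
    ((hS.2.1.differentiableOn one_ne_zero).differentiableAt (hJ.mem_nhds hy)).hasDerivAt⟩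

theorem one_one_apply (hS : SolvesS 1 1 U V J) {y : ℝ} (hy : y ∈ J) :
    I * ((y + 1 : ℝ) * deriv U y + U y / 2) = ((‖U y‖ ^ 2 + ‖V y‖ ^ 2 : ℝ) : ℂ) * V y
        + ((2 * (conj (U y) * V y).re : ℝ) : ℂ) * U y ∧
      I * ((y - 1 : ℝ) * deriv V y + V y / 2) = ((‖U y‖ ^ 2 + ‖V y‖ ^ 2 : ℝ) : ℂ) * U y
        + ((2 * (conj (U y) * V y).re : ℝ) : ℂ) * V y := by
  have hR : Rfun U V y = ((2 * (conj (U y) * V y).re : ℝ) : ℂ) := by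
    rw [Rfun, ← conj_conj (U y), ← map_mul, conj_conj, add_comm, mul_comm, Complex.add_conj]
  obtain ⟨hU, hV⟩ := hS.2.2 y hy
  simp only [Ffun, Gfun, hR, Nat.add_sub_cancel, Nat.sub_self, Nat.cast_one, one_mul, pow_one,
    pow_zero, mul_one] at hU hV
  push_cast at hU hV ⊢
  exact ⟨by linear_combination hU, by linear_combination hV⟩

theorem balance_eq (hS : SolvesS 1 1 U V J) (hJ : IsOpen J) (hJc : Convex ℝ J) {y₀ y : ℝ}
    (hy₀ : y₀ ∈ J) (hy : y ∈ J) :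
    (1 + y) * ‖U y‖ ^ 2 - (1 - y) * ‖V y‖ ^ 2 = (1 + y₀) * ‖U y₀‖ ^ 2 - (1 - y₀) * ‖V y₀‖ ^ 2 := by
  have hB : ∀ t, (((1 + t) * ‖U t‖ ^ 2 - (1 - t) * ‖V t‖ ^ 2 : ℝ) : ℂ)
      = (1 + t) * (conj (U t) * U t) - (1 - t) * (conj (V t) * V t) := by
    intro t; push_cast; rw [conj_mul', conj_mul']
  have := hJc.eq_of_forall_hasDerivAt_zero
    (f := fun t ↦ (1 + t) * (conj (U t) * U t) - (1 - t) * (conj (V t) * V t))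
    (fun t ht ↦ ?_) hy hy₀
  · rwa [← hB, ← hB, ofReal_inj] at this
  obtain ⟨hU, hV⟩ := hS.hasDerivAt hJ ht
  obtain ⟨hu, hv⟩ := hS.one_one_apply ht
  have hlin : HasDerivAt (fun s : ℝ ↦ (s : ℂ)) 1 t := (hasDerivAt_id t).ofReal_comp
  refine ((((hlin.const_add 1).mul (hU.star.mul hU)).sub
    ((hlin.const_sub 1).mul (hV.star.mul hV)))).congr_deriv ?_
  simp only [Pi.mul_apply, Complex.star_def]
  linear_combination balance_deriv_eq_zero hu hv

theorem hasDerivAt_weightedProduct_re_im (hS : SolvesS 1 1 U V J) (hJ : IsOpen J) {y : ℝ} (hy : y ∈ J) (hy1 : y ^ 2 < 1)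
    (hbal : (1 + y) * ‖U y‖ ^ 2 = (1 - y) * ‖V y‖ ^ 2) :
    HasDerivAt (fun t ↦ (weightedProduct U V t).re) (-(4 / √(1 - y ^ 2) ^ 3
      * (weightedProduct U V y).re * (weightedProduct U V y).im)) y ∧
    HasDerivAt (fun t ↦ (weightedProduct U V t).im) (4 / √(1 - y ^ 2) ^ 3
      * (2 * (weightedProduct U V y).re ^ 2 + (weightedProduct U V y).im ^ 2)) y := by
  obtain ⟨hU, hV⟩ := hS.hasDerivAt hJ hy
  obtain ⟨hu, hv⟩ := hS.one_one_apply hy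
  have hD := hasDerivAt_weightedProduct hU hV hy1 hu hv
  rw [conj_mul', conj_mul'] at hD
  have hZ : (conj (U y) * V y).re ^ 2 + (conj (U y) * V y).im ^ 2 = ‖U y‖ ^ 2 * ‖V y‖ ^ 2 := by
    rw [← mul_pow, ← Complex.norm_conj (U y), ← norm_mul, Complex.sq_norm, Complex.normSq_apply]
    ring
  have hw : weightedProduct U V y = √(1 - y ^ 2) * (conj (U y) * V y) := rfl
  have hs : 0 < √(1 - y ^ 2) := Real.sqrt_pos.2 (sub_pos.2 hy1)
  set Z := conj (U y) * V y
  set s := √(1 - y ^ 2)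
  have hF : (‖U y‖ ^ 2 + ‖V y‖ ^ 2) * ((1 + y) * ‖U y‖ ^ 2 + (1 - y) * ‖V y‖ ^ 2)
      = 4 * (Z.re ^ 2 + Z.im ^ 2) := by
    rw [hZ]; linear_combination (‖U y‖ ^ 2 - ‖V y‖ ^ 2) * hbal
  have hFc : ((‖U y‖ ^ 2 + ‖V y‖ ^ 2 : ℝ) : ℂ) * ((1 + y) * (‖U y‖ : ℂ) ^ 2
      + (1 - y) * (‖V y‖ : ℂ) ^ 2) = ((4 * (Z.re ^ 2 + Z.im ^ 2) : ℝ) : ℂ) := by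
    exact_mod_cast hF
  rw [hFc] at hD
  refine ⟨hD.re.congr_deriv ?_, hD.im.congr_deriv ?_⟩
  all_goals
    rw [hw]
    simp only [div_ofReal_re, div_ofReal_im, mul_re, mul_im, I_re, I_im, ofReal_re, ofReal_im,
      add_re, add_im, re_ofNat, im_ofNat, zero_mul, mul_zero, sub_zero, add_zero, zero_add, one_mul]
    field_simp
    ring

theorem right_endpoint_lt_one {a b : ℝ} (hb : b ≤ 1)
    (hS : SolvesS 1 1 U V (Ioo a b)) (h0 : (0 : ℝ) ∈ Ioo a b) (heq : ‖U 0‖ = ‖V 0‖)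
    (hphase : |(conj (U 0) * V 0).im| < ‖U 0‖ * ‖V 0‖) : b < 1 := by
  refine hb.lt_of_ne fun hb₁ ↦ ?_
  subst hb₁
  have ha₀ : a < 0 := h0.1
  have hmem : ∀ y ∈ Ico (0 : ℝ) 1, y ∈ Ioo a 1 ∧ y ^ 2 < 1 := fun y hy ↦
    ⟨⟨ha₀.trans_le hy.1, hy.2⟩, by nlinarith [hy.1, hy.2]⟩
  have hbal : ∀ y ∈ Ioo a 1, (1 + y) * ‖U y‖ ^ 2 = (1 - y) * ‖V y‖ ^ 2 := fun y hy ↦ by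
    have := hS.balance_eq isOpen_Ioo (convex_Ioo a 1) ⟨ha₀, one_pos⟩ hy
    rw [heq] at this
    linarith
  have hderiv := fun y (hy : y ∈ Ico (0 : ℝ) 1) ↦ hS.hasDerivAt_weightedProduct_re_im isOpen_Ioo
    (hmem y hy).1 (hmem y hy).2 (hbal y (hmem y hy).1)
  refine planar_blowup one_pos (fun y hy ↦ (hderiv y hy).1) (fun y hy ↦ (hderiv y hy).2)
    (fun y hy ↦ ?_) ?_
  · have hs : 0 < √(1 - y ^ 2) := Real.sqrt_pos.2 (sub_pos.2 (hmem y hy).2)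
    have hs1 : √(1 - y ^ 2) ≤ 1 := Real.sqrt_le_one.2 (by nlinarith)
    have hs2 : √(1 - y ^ 2) ^ 2 = 1 - y ^ 2 := Real.sq_sqrt (sub_pos.2 (hmem y hy).2).le
    have hs3 : √(1 - y ^ 2) ^ 3 ≤ √(1 - y ^ 2) ^ 2 := pow_le_pow_of_le_one hs.le hs1 (by norm_num)
    rw [mul_div_assoc', le_div_iff₀ (by positivity)]
    nlinarith [hy.1, hy.2]
  · have : |(conj (U 0) * V 0).im| < ‖conj (U 0) * V 0‖ := by
      rwa [norm_mul, Complex.norm_conj]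
    simpa [weightedProduct] using Complex.abs_im_lt_norm.1 this

open scoped Pointwise in
theorem comp_neg {k l : ℕ} (hS : SolvesS k l U V J) :
    SolvesS k l (fun t ↦ V (-t)) (fun t ↦ U (-t)) (-J) := by
  obtain ⟨hU, hV, hode⟩ := hS
  have hmaps : MapsTo (fun t : ℝ ↦ -t) (-J) J := fun t ht ↦ ht
  refine ⟨hV.comp contDiff_neg.contDiffOn hmaps, hU.comp contDiff_neg.contDiffOn hmaps,
    fun y hy ↦ ?_⟩
  have hR : Rfun (fun t ↦ V (-t)) (fun t ↦ U (-t)) y = Rfun U V (-y) := by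
    simp only [Rfun]; ring
  have hF : Ffun k l (fun t ↦ V (-t)) (fun t ↦ U (-t)) y = Ffun k l U V (-y) := by
    simp only [Ffun, hR, add_comm (‖V (-y)‖ ^ 2)]
  have hG : Gfun k l (fun t ↦ V (-t)) (fun t ↦ U (-t)) y = Gfun k l U V (-y) := by
    simp only [Gfun, hR, add_comm (‖V (-y)‖ ^ 2)]
  obtain ⟨hu, hv⟩ := hode (-y) hy
  rw [deriv_comp_neg, deriv_comp_neg, hF, hG]
  push_cast at hu hv
  exact ⟨by linear_combination hv, by linear_combination hu⟩

end SolvesS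

theorem no_extension_to_endpoints_general (U V : ℝ → ℂ) (a b : ℝ)
    (ha : -1 ≤ a) (hb : b ≤ 1)
    (hS : SolvesS 1 1 U V (Ioo a b)) (h0 : (0 : ℝ) ∈ Ioo a b)
    (heq : ‖U 0‖ = ‖V 0‖)
    (hphase : |((starRingEnd ℂ) (U 0) * V 0).im| < ‖U 0‖ * ‖V 0‖) :
    b < 1 ∧ -1 < a := by
  refine ⟨hS.right_endpoint_lt_one hb h0 heq hphase, ?_⟩
  have hS' := hS.comp_neg
  rw [neg_Ioo] at hS'
  have hphase' : |(conj (V (-0)) * U (-0)).im| < ‖V (-0)‖ * ‖U (-0)‖ := by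
    rw [neg_zero, mul_comm ‖V 0‖, ← abs_neg, ← conj_im, map_mul, conj_conj, mul_comm]
    exact hphase
  have := hS'.right_endpoint_lt_one (by linarith) ⟨by linarith [h0.2], by linarith [h0.1]⟩
    (by rw [neg_zero, heq]) hphase'
  linarith

/-- for `k = ℓ = 1`, a solution of (S) on an open interval
`(a, b) ⊆ (-1,1)` containing `0` with `|U(0)| = |V(0)| > 0` that does not lie on
the invariant phase lines (`|Im(conj(U(0)) V(0))| < |U(0)| |V(0)|`) extends
neither to `y → 1` nor to `y → -1`: necessarily `b < 1` and `a > -1`. -/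
theorem no_extension_to_endpoints (U V : ℝ → ℂ) (a b : ℝ)
    (ha : -1 ≤ a) (hb : b ≤ 1)
    (hS : SolvesS 1 1 U V (Ioo a b)) (h0 : (0 : ℝ) ∈ Ioo a b)
    (heq : ‖U 0‖ = ‖V 0‖)
    (hpos : 0 < ‖U 0‖)
    (hphase : |((starRingEnd ℂ) (U 0) * V 0).im| < ‖U 0‖ * ‖V 0‖) :
    b < 1 ∧ -1 < a :=
  no_extension_to_endpoints_general U V a b ha hb hS h0 heq hphase
end

section
/- Let ξ, η : J → ℝ be continuously differentiable functions on an interval J satisfying the planar autonomous system ξ'(τ) = 2·ξ(τ)³·η(τ) and η'(τ) = 8·ξ(τ)²·(1 − η(τ)²) for all τ ∈ J. Then the function τ ↦ ξ(τ)⁸·(1 − η(τ)²) is constant on J. -/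
theorem Convex.eq_of_hasDerivWithinAt_eq_zero {E : Type*} [NormedAddCommGroup E]
    [NormedSpace ℝ E] {s : Set ℝ} (hs : Convex ℝ s) {f : ℝ → E}
    (hf : ∀ x ∈ s, HasDerivWithinAt f 0 s x) {x y : ℝ} (hx : x ∈ s) (hy : y ∈ s) :
    f x = f y := by
  have h := hs.norm_image_sub_le_of_norm_hasDerivWithin_le hf (C := 0) (by simp) hx hy
  rw [zero_mul, norm_le_zero_iff, sub_eq_zero] at h
  exact h.symm

/-- Along a solution, `d/dτ (ξ⁸) (1 - η²) = 16 ξ¹⁰ η (1 - η²)` and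
`ξ⁸ d/dτ (1 - η²) = -16 ξ¹⁰ η (1 - η²)` cancel. -/
theorem hasDerivAt_pow_eight_mul_one_sub_sq {ξ η : ℝ → ℝ} {τ : ℝ}
    (hξ : HasDerivAt ξ (2 * ξ τ ^ 3 * η τ) τ)
    (hη : HasDerivAt η (8 * ξ τ ^ 2 * (1 - η τ ^ 2)) τ) :
    HasDerivAt (fun t => ξ t ^ 8 * (1 - η t ^ 2)) 0 τ := by
  refine ((hξ.fun_pow 8).fun_mul ((hη.fun_pow 2).const_sub 1)).congr_deriv ?_
  push_cast
  ring

/-- `E(ξ, η) = ξ⁸ (1 - η²)` is a first integral of the planar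
autonomous system `ξ' = 2ξ³η`, `η' = 8ξ²(1 - η²)` on an interval `J`. -/
theorem planar_system_first_integral (J : Set ℝ) (hJ : J.OrdConnected)
    (ξ η : ℝ → ℝ)
    (hξ : ∀ τ ∈ J, HasDerivAt ξ (2 * ξ τ ^ 3 * η τ) τ)
    (hη : ∀ τ ∈ J, HasDerivAt η (8 * ξ τ ^ 2 * (1 - η τ ^ 2)) τ) :
    ∀ τ₁ ∈ J, ∀ τ₂ ∈ J,
      ξ τ₁ ^ 8 * (1 - η τ₁ ^ 2) = ξ τ₂ ^ 8 * (1 - η τ₂ ^ 2) := fun _ h₁ _ h₂ =>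
  hJ.convex.eq_of_hasDerivWithinAt_eq_zero
    (fun τ hτ => (hasDerivAt_pow_eight_mul_one_sub_sq (hξ τ hτ) (hη τ hτ)).hasDerivWithinAt) h₁ h₂
end

section
/- Let ξ, η : J → ℝ be continuously differentiable on an interval J and satisfy ξ'(τ) = 2·ξ(τ)³·η(τ) and η'(τ) = 8·ξ(τ)²·(1 − η(τ)²) for all τ ∈ J. Suppose for some τ₀ ∈ J that ξ(τ₀) ≠ 0 and −1 < η(τ₀) < 1. Then for every τ ∈ J one has ξ(τ) ≠ 0 and −1 < η(τ) < 1, and η is strictly increasing on J. -/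
/-!
The quantity `E = ξ⁸ (1 - η²)` has derivative `8ξ⁷(1 - η²)·2ξ³η - ξ⁸·2η·8ξ²(1 - η²) = 0`, so it is
constant along a solution on the interval `J`. Since `E > 0` exactly when `ξ ≠ 0` and `η ∈ (-1, 1)`,
these conditions propagate from `τ₀` to all of `J`, and then `η' = 8ξ²(1 - η²) > 0` there.
-/

def planarFirstIntegral (x y : ℝ) : ℝ := x ^ 8 * (1 - y ^ 2)

lemma one_sub_sq_pos_iff {y : ℝ} : 0 < 1 - y ^ 2 ↔ -1 < y ∧ y < 1 := by
  rw [sub_pos, sq_lt_one_iff_abs_lt_one, abs_lt]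

lemma planarFirstIntegral_pos_iff {x y : ℝ} :
    0 < planarFirstIntegral x y ↔ x ≠ 0 ∧ -1 < y ∧ y < 1 := by
  rw [planarFirstIntegral, ← one_sub_sq_pos_iff]
  constructor
  · intro h
    have hx8 : 0 < x ^ 8 := lt_of_le_of_ne (by positivity) fun h0 => by simp [← h0] at h
    exact ⟨fun hx => by simp [hx] at hx8, pos_of_mul_pos_right h hx8.le⟩
  · rintro ⟨hx, hy⟩
    positivity

lemma hasDerivAt_planarFirstIntegral {ξ η : ℝ → ℝ} {τ : ℝ}
    (hξ : HasDerivAt ξ (2 * ξ τ ^ 3 * η τ) τ)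
    (hη : HasDerivAt η (8 * ξ τ ^ 2 * (1 - η τ ^ 2)) τ) :
    HasDerivAt (fun t => planarFirstIntegral (ξ t) (η t)) 0 τ := by
  refine ((hξ.fun_pow 8).fun_mul ((hη.fun_pow 2).const_sub 1)).congr_deriv ?_
  norm_num
  ring

lemma Set.OrdConnected.eq_of_hasDerivAt_zero {E : Type*} [NormedAddCommGroup E]
    [NormedSpace ℝ E] {J : Set ℝ} (hJ : J.OrdConnected) {f : ℝ → E}
    (hf : ∀ τ ∈ J, HasDerivAt f 0 τ) {a b : ℝ} (ha : a ∈ J) (hb : b ∈ J) : f b = f a := by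
  have hmvt := (convex_iff_ordConnected.2 hJ).norm_image_sub_le_of_norm_hasDerivWithin_le
    (fun τ hτ => (hf τ hτ).hasDerivWithinAt) (fun _ _ => (norm_zero (E := E)).le) ha hb
  rwa [zero_mul, norm_le_zero_iff, sub_eq_zero] at hmvt

lemma Set.OrdConnected.strictMonoOn_of_hasDerivAt_pos {J : Set ℝ} (hJ : J.OrdConnected)
    {f f' : ℝ → ℝ} (hf : ∀ τ ∈ J, HasDerivAt f (f' τ) τ) (hf' : ∀ τ ∈ J, 0 < f' τ) :
    StrictMonoOn f J :=
  strictMonoOn_of_hasDerivWithinAt_pos (convex_iff_ordConnected.2 hJ)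
    (fun τ hτ => (hf τ hτ).continuousAt.continuousWithinAt)
    (fun τ hτ => (hf τ (interior_subset hτ)).hasDerivWithinAt)
    (fun τ hτ => hf' τ (interior_subset hτ))

/-- for the planar system `ξ' = 2ξ³η`, `η' = 8ξ²(1 - η²)`, if at
some point `ξ(τ₀) ≠ 0` and `η(τ₀) ∈ (-1,1)` (i.e. the first integral
`E = ξ⁸(1-η²)` is positive), then `ξ` never vanishes, `η` stays in `(-1,1)`,
and `η` is strictly increasing. -/
theorem planar_system_eta_strict_mono (J : Set ℝ) (hJ : J.OrdConnected)
    (ξ η : ℝ → ℝ)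
    (hξ : ∀ τ ∈ J, HasDerivAt ξ (2 * ξ τ ^ 3 * η τ) τ)
    (hη : ∀ τ ∈ J, HasDerivAt η (8 * ξ τ ^ 2 * (1 - η τ ^ 2)) τ)
    (τ₀ : ℝ) (hτ₀ : τ₀ ∈ J) (hξ0 : ξ τ₀ ≠ 0)
    (hη0 : -1 < η τ₀ ∧ η τ₀ < 1) :
    (∀ τ ∈ J, ξ τ ≠ 0 ∧ -1 < η τ ∧ η τ < 1) ∧ StrictMonoOn η J := by
  have hinv : ∀ τ ∈ J, ξ τ ≠ 0 ∧ -1 < η τ ∧ η τ < 1 := by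
    intro τ hτ
    rw [← planarFirstIntegral_pos_iff,
      hJ.eq_of_hasDerivAt_zero (fun t ht => hasDerivAt_planarFirstIntegral (hξ t ht) (hη t ht))
        hτ₀ hτ]
    exact planarFirstIntegral_pos_iff.2 ⟨hξ0, hη0⟩
  refine ⟨hinv, hJ.strictMonoOn_of_hasDerivAt_pos hη fun τ hτ => ?_⟩
  obtain ⟨hξτ, hητ⟩ := hinv τ hτ
  have hsq : 0 < 1 - η τ ^ 2 := one_sub_sq_pos_iff.2 hητ
  positivity
end
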